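/- arXiv:1902.06603 — 6 statements merged into one kernel-verified Lean document; each statement's English description precedes it below -/
import Mathlib

section
/- Let σ > 0 and let A be a real random variable with A ~ N(-σ²/2, σ²) (Gaussian with mean -σ²/2 and variance σ²). Then E[min(1, exp(A))] = 2·Φ(-σ/2), where Φ is the cumulative distribution function of the standard normal distribution. -/
/-!
Split the expectation at `A = 0`. On `{A ≤ 0}` the integrand is `exp A`, and multiplying the
`N(-σ²/2, σ²)` density by `exp x` gives exactly the `N(σ²/2, σ²)` density, so this part is
`N(σ²/2, σ²)(-∞, 0]`. On `{A > 0}` the integrand is `1`, and by the symmetry `x ↦ -x` the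
probability of `{A > 0}` is the same number. Standardizing, `N(σ²/2, σ²)(-∞, 0] = Φ(-σ/2)`.
-/

open MeasureTheory ProbabilityTheory Real
open scoped NNReal

namespace ProbabilityTheory

lemma gaussianPDFReal_mul_exp (m : ℝ) (v : ℝ≥0) (x : ℝ) :
    gaussianPDFReal m v x * exp x = exp (m + v / 2) * gaussianPDFReal (m + v) v x := by
  by_cases hv : v = 0
  · simp [hv, gaussianPDFReal_zero_var]
  have hv' : (v : ℝ) ≠ 0 := NNReal.coe_ne_zero.mpr hv
  simp only [gaussianPDFReal]
  rw [mul_assoc, ← exp_add, mul_left_comm, ← exp_add]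
  congr 2
  field_simp
  ring

lemma setIntegral_exp_gaussianReal (m : ℝ) {v : ℝ≥0} (hv : v ≠ 0) {s : Set ℝ}
    (hs : MeasurableSet s) :
    ∫ x in s, exp x ∂gaussianReal m v = exp (m + v / 2) * (gaussianReal (m + v) v).real s := by
  rw [← integral_indicator hs, integral_gaussianReal_eq_integral_smul hv, measureReal_def,
    gaussianReal_apply_eq_integral _ hv, ENNReal.toReal_ofReal
      (setIntegral_nonneg hs fun x _ ↦ gaussianPDFReal_nonneg _ _ x), ← integral_const_mul,
    ← integral_indicator hs]
  congr 1 with x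
  by_cases hx : x ∈ s <;> simp [hx, gaussianPDFReal_mul_exp]

lemma gaussianReal_real_Ioi (m : ℝ) {v : ℝ≥0} (hv : v ≠ 0) (x : ℝ) :
    (gaussianReal m v).real (Set.Ioi x) = (gaussianReal (-m) v).real (Set.Iic (-x)) := by
  have := nullSingletonClass_gaussianReal (μ := m) hv
  rw [← gaussianReal_map_neg, map_measureReal_apply measurable_neg measurableSet_Iic,
    Set.neg_preimage, Set.neg_Iic, neg_neg, measureReal_congr Ioi_ae_eq_Ici]

lemma cdf_gaussianReal (m : ℝ) {v : ℝ≥0} (hv : v ≠ 0) (x : ℝ) :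
    cdf (gaussianReal m v) x = cdf (gaussianReal 0 1) ((x - m) / √v) := by
  have hsqrt : 0 < √(v : ℝ) := sqrt_pos.mpr (by positivity)
  have hmap : gaussianReal m v = (gaussianReal 0 1).map (fun y ↦ √v * y + m) := by
    have hvar : NNReal.mk (√v ^ 2) (sq_nonneg _) * 1 = v :=
      NNReal.eq ((mul_one _).trans (sq_sqrt v.coe_nonneg))
    calc gaussianReal m v = ((gaussianReal 0 1).map (√v * ·)).map (· + m) := by
          rw [gaussianReal_map_const_mul, hvar, gaussianReal_map_add_const, mul_zero, zero_add]
      _ = _ := Measure.map_map (measurable_add_const m) (measurable_const_mul _)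
  rw [cdf_eq_real, cdf_eq_real, hmap, map_measureReal_apply (by fun_prop) measurableSet_Iic]
  congr 1
  ext y
  simp only [Set.mem_preimage, Set.mem_Iic]
  rw [le_div_iff₀ hsqrt]
  constructor <;> intro h <;> linarith

lemma integral_min_one_exp_gaussianReal {v : ℝ≥0} (hv : v ≠ 0) :
    ∫ x, min 1 (exp x) ∂gaussianReal (-v / 2) v = 2 * cdf (gaussianReal (v / 2) v) 0 := by
  have hcont : Continuous fun x : ℝ ↦ min 1 (exp x) := continuous_const.min continuous_exp
  have hint : Integrable (fun x : ℝ ↦ min 1 (exp x)) (gaussianReal (-v / 2) v) :=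
    (integrable_const (1 : ℝ)).mono' hcont.aestronglyMeasurable (ae_of_all _ fun x ↦ by
      rw [norm_of_nonneg (le_min zero_le_one (exp_pos x).le)]
      exact min_le_left _ _)
  have hIic : ∫ x in Set.Iic 0, min 1 (exp x) ∂gaussianReal (-v / 2) v
      = cdf (gaussianReal (v / 2) v) 0 := by
    rw [setIntegral_congr_fun measurableSet_Iic fun x hx ↦ min_eq_right (exp_le_one_iff.mpr hx),
      setIntegral_exp_gaussianReal _ hv measurableSet_Iic, cdf_eq_real,
      show (-v / 2 + v / 2 : ℝ) = 0 by ring, show (-v / 2 + v : ℝ) = v / 2 by ring,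
      exp_zero, one_mul]
  have hIoi : ∫ x in Set.Ioi 0, min 1 (exp x) ∂gaussianReal (-v / 2) v
      = cdf (gaussianReal (v / 2) v) 0 := by
    rw [setIntegral_congr_fun measurableSet_Ioi fun x hx ↦ min_eq_left (one_le_exp hx.le),
      setIntegral_const, smul_eq_mul, mul_one,
      gaussianReal_real_Ioi _ hv, cdf_eq_real, neg_zero, neg_div, neg_neg]
  rw [← integral_add_compl measurableSet_Iic hint, Set.compl_Iic, hIic, hIoi, two_mul]

end ProbabilityTheory

/-- For `σ > 0` and a real random variable `A ~ N(-σ²/2, σ²)`,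
`E[min(1, exp A)] = 2 Φ(-σ/2)` where `Φ` is the standard normal CDF. -/
theorem expectation_min_one_exp_gaussian
    {Ω : Type*} [MeasurableSpace Ω] (P : Measure Ω) [IsProbabilityMeasure P]
    (σ : ℝ) (hσ : 0 < σ) (A : Ω → ℝ)
    (hA : Measure.map A P = gaussianReal (-σ ^ 2 / 2) (Real.toNNReal (σ ^ 2))) :
    ∫ ω, min 1 (Real.exp (A ω)) ∂P = 2 * cdf (gaussianReal 0 1) (-σ / 2) := by
  set v := Real.toNNReal (σ ^ 2)
  have hvσ : (v : ℝ) = σ ^ 2 := Real.coe_toNNReal _ (sq_nonneg σ)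
  have hv : v ≠ 0 := by positivity
  have hAm : AEMeasurable A P := .of_map_ne_zero (by simp [hA, IsProbabilityMeasure.ne_zero])
  rw [← integral_map hAm (continuous_const.min continuous_exp).aestronglyMeasurable, hA, ← hvσ,
    integral_min_one_exp_gaussianReal hv, cdf_gaussianReal _ hv, hvσ, sqrt_sq hσ.le]
  congr 2
  field_simp
  ring
end

section
/- For all real numbers a, b and every δ > 0: if |exp(a)·1_{a<0} − exp(b)·1_{b<0}| > δ, then either |a − b| > δ or |a| ≤ δ. (Here 1_{a<0} equals 1 when a < 0 and 0 otherwise.) -/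
lemma exp_lip_neg (a b : ℝ) (ha : a ≤ 0) (hb : b ≤ 0) :
    |Real.exp a - Real.exp b| ≤ |a - b| := by
  have h1 := Real.add_one_le_exp (a - b)
  have h2 := Real.add_one_le_exp (b - a)
  have ea1 : Real.exp a ≤ 1 := Real.exp_le_one_iff.mpr ha
  have eb1 : Real.exp b ≤ 1 := Real.exp_le_one_iff.mpr hb
  have epa := Real.exp_pos a
  have epb := Real.exp_pos b
  have hab : Real.exp (a - b) = Real.exp a / Real.exp b := Real.exp_sub a b
  have hba : Real.exp (b - a) = Real.exp b / Real.exp a := Real.exp_sub b a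
  rw [hab] at h1
  rw [hba] at h2
  have h1' : (a - b + 1) * Real.exp b ≤ Real.exp a := by
    rw [← le_div_iff₀ epb]; exact h1
  have h2' : (b - a + 1) * Real.exp a ≤ Real.exp b := by
    rw [← le_div_iff₀ epa]; exact h2
  rw [abs_sub_le_iff]
  constructor
  · nlinarith [abs_nonneg (a - b), le_abs_self (a - b)]
  · nlinarith [abs_nonneg (a - b), neg_abs_le (a - b)]

/-- If `|exp(a)·1_{a<0} - exp(b)·1_{b<0}| > δ` for some `δ > 0`,
then `|a - b| > δ` or `|a| ≤ δ`. -/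
theorem abs_sub_exp_indicator_gt_imp (a b δ : ℝ) (hδ : 0 < δ)
    (h : |(if a < 0 then Real.exp a else 0) - (if b < 0 then Real.exp b else 0)| > δ) :
    |a - b| > δ ∨ |a| ≤ δ := by
  by_contra hc
  push_neg at hc
  obtain ⟨h1, h2⟩ := hc
  have habs := abs_sub_abs_le_abs_sub a b
  rcases lt_or_ge a 0 with haneg | hapos
  · have haδ : a < -δ := by
      have : |a| = -a := abs_of_neg haneg
      linarith [h2, this ▸ h2]
    have hb : b < 0 := by
      have := neg_abs_le (a - b)
      linarith
    rw [if_pos haneg, if_pos hb] at h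
    have := exp_lip_neg a b haneg.le hb.le
    linarith
  · have haδ : δ < a := by
      rw [abs_of_nonneg hapos] at h2; linarith
    rcases lt_or_ge b 0 with hbneg | hbpos
    · have : a - b ≤ |a - b| := le_abs_self _
      linarith
    · rw [if_neg (not_lt.mpr hapos), if_neg (not_lt.mpr hbpos)] at h
      simp at h
      linarith
end

section
/- Let A and B be real random variables on a probability space, let δ > 0, and set q = exp(A)·1_{A<0} − exp(B)·1_{B<0}. Then P(|q| > δ) ≤ P(|A − B| > δ) + P(−δ ≤ A ≤ δ). -/
open MeasureTheory

lemma exp_lip_neg_s4 {x y : ℝ} (hx : x ≤ 0) (hy : y ≤ 0) :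
    |Real.exp x - Real.exp y| ≤ |x - y| := by
  wlog h : y ≤ x generalizing x y
  · rw [abs_sub_comm, abs_sub_comm x y]; exact this hy hx (le_of_not_ge h)
  rw [abs_of_nonneg (sub_nonneg.2 (Real.exp_le_exp.2 h)), abs_of_nonneg (sub_nonneg.2 h)]
  have h1 : (y - x) + 1 ≤ Real.exp (y - x) := Real.add_one_le_exp _
  have h2 : Real.exp x ≤ 1 := Real.exp_le_one_iff.2 hx
  have hm : Real.exp x * Real.exp (y - x) = Real.exp y := by
    rw [← Real.exp_add]; ring_nf
  nlinarith [Real.exp_pos x, Real.exp_pos (y - x)]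

/-- For real random variables `A, B` and `δ > 0`, with
`q = exp(A)·1_{A<0} - exp(B)·1_{B<0}`,
`P(|q| > δ) ≤ P(|A - B| > δ) + P(-δ ≤ A ≤ δ)`. -/
theorem prob_abs_q_gt_le
    {Ω : Type*} [MeasurableSpace Ω] (P : Measure Ω) [IsProbabilityMeasure P]
    (A B : Ω → ℝ) (δ : ℝ) (hδ : 0 < δ) :
    P {ω | δ < |(if A ω < 0 then Real.exp (A ω) else 0)
              - (if B ω < 0 then Real.exp (B ω) else 0)|}
      ≤ P {ω | δ < |A ω - B ω|} + P {ω | -δ ≤ A ω ∧ A ω ≤ δ} := by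
  have hsub : {ω | δ < |(if A ω < 0 then Real.exp (A ω) else 0)
              - (if B ω < 0 then Real.exp (B ω) else 0)|}
      ⊆ {ω | δ < |A ω - B ω|} ∪ {ω | -δ ≤ A ω ∧ A ω ≤ δ} := by
    intro ω hω
    simp only [Set.mem_setOf_eq, Set.mem_union]
    by_contra h
    push_neg at h
    obtain ⟨h1, h2⟩ := h
    simp only [Set.mem_setOf_eq] at hω
    have h1' := abs_le.1 h1
    rcases lt_or_ge (A ω) 0 with ha | ha
    · have haδ : A ω < -δ := by
        by_contra hc
        linarith [h2 (not_lt.1 hc)]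
      rcases lt_or_ge (B ω) 0 with hb | hb
      · rw [if_pos ha, if_pos hb] at hω
        have := exp_lip_neg_s4 ha.le hb.le
        have := abs_le.1 h1
        linarith [lt_of_lt_of_le hω (le_trans (exp_lip_neg_s4 ha.le hb.le) h1)]
      · linarith [h1'.1]
    · rw [if_neg (not_lt.2 ha)] at hω
      have haδ : δ < A ω := h2 (by linarith)
      rcases lt_or_ge (B ω) 0 with hb | hb
      · linarith [h1'.2]
      · rw [if_neg (not_lt.2 hb)] at hω
        simp at hω
        linarith
  calc P _ ≤ P ({ω | δ < |A ω - B ω|} ∪ {ω | -δ ≤ A ω ∧ A ω ≤ δ}) := measure_mono hsub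
    _ ≤ _ := measure_union_le _ _
end

section
/- Let π be a strictly positive probability density on ℝ^k (with respect to Lebesgue measure) such that log π is differentiable with L-Lipschitz gradient ∇log π, let x be a point at which ∇log π is differentiable with derivative H(x), let Λ be a symmetric positive definite k×k matrix and l > 0, and let W ~ N(0, l²Λ). Then lim_{d→∞} (d−1)²·E_W[ | log π(x + W/√(d−1)) − log π(x) − ⟨∇log π(x), W⟩/√(d−1) − ⟨W, H(x)·W⟩/(2(d−1)) |² ] = 0. -/
open MeasureTheory ProbabilityTheory Filter
open scoped RealInnerProductSpace Topology

section Aux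

/-- The 4th power is integrable against any real Gaussian. -/
lemma aux_gaussian_integrable_pow_four (m : ℝ) (v : NNReal) :
    Integrable (fun y : ℝ => y ^ 4) (gaussianReal m v) := by
  rcases eq_or_ne v 0 with hv | hv
  · subst hv
    rw [gaussianReal_zero_var]
    have hm : Measurable fun y : ℝ => y ^ 4 := (continuous_pow 4).measurable
    refine ⟨hm.aestronglyMeasurable, ?_⟩
    rw [HasFiniteIntegral, lintegral_dirac' _ hm.enorm]
    exact ENNReal.coe_lt_top
  · rw [gaussianReal_of_var_ne_zero _ hv]
    rw [integrable_withDensity_iff (measurable_gaussianPDF _ _)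
      (ae_of_all _ fun x => ENNReal.ofReal_lt_top)]
    have hv0 : (0:ℝ) < (v:ℝ) := by positivity
    have hb : (0:ℝ) < (2 * (v:ℝ))⁻¹ := by positivity
    set b : ℝ := (2 * (v:ℝ))⁻¹ with hbdef
    have hpdf : ∀ y : ℝ, (gaussianPDF m v y).toReal
        = (Real.sqrt (2 * Real.pi * v))⁻¹ * Real.exp (-b * (y - m) ^ 2) := by
      intro y
      rw [gaussianPDF, ENNReal.toReal_ofReal (gaussianPDFReal_nonneg _ _ _), gaussianPDFReal,
        hbdef]
      congr 2
      rw [neg_div, neg_mul, inv_mul_eq_div]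
    have hint0 : Integrable (fun z : ℝ => z ^ 4 * Real.exp (-b * z ^ 2)) := by
      have := integrable_rpow_mul_exp_neg_mul_sq hb (s := 4) (by norm_num)
      have h4 : ∀ x : ℝ, x ^ (4:ℝ) = x ^ (4:ℕ) := fun x => by
        rw [show (4:ℝ) = ((4:ℕ):ℝ) by norm_num, Real.rpow_natCast]
      simpa [h4] using this
    have hintexp : Integrable (fun z : ℝ => Real.exp (-b * z ^ 2)) :=
      integrable_exp_neg_mul_sq hb
    have hint1 : Integrable (fun z : ℝ => (z + m) ^ 4 * Real.exp (-b * z ^ 2)) := by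
      refine Integrable.mono' ((hint0.const_mul 8).add ((hintexp.const_mul (8 * m ^ 4))))
        ?_ (ae_of_all _ fun z => ?_)
      · exact (((continuous_id.add continuous_const).pow 4).mul
          (Real.continuous_exp.comp (by continuity))).aestronglyMeasurable
      · have he : (0:ℝ) < Real.exp (-b * z ^ 2) := Real.exp_pos _
        have hzm : (z + m) ^ 4 ≤ 8 * (z ^ 4 + m ^ 4) := by
          nlinarith [sq_nonneg (z - m), sq_nonneg (z + m), sq_nonneg (z ^ 2 - m ^ 2),
            sq_nonneg (z * m), sq_nonneg z, sq_nonneg m]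
        have h4 : (0:ℝ) ≤ (z + m) ^ 4 := by positivity
        rw [Real.norm_eq_abs, abs_of_nonneg (by positivity)]
        calc (z + m) ^ 4 * Real.exp (-b * z ^ 2)
            ≤ (8 * (z ^ 4 + m ^ 4)) * Real.exp (-b * z ^ 2) :=
              mul_le_mul_of_nonneg_right hzm he.le
          _ = 8 * (z ^ 4 * Real.exp (-b * z ^ 2)) + 8 * m ^ 4 * Real.exp (-b * z ^ 2) := by ring
    have hint2 : Integrable (fun y : ℝ => y ^ 4 * Real.exp (-b * (y - m) ^ 2)) := by
      have := hint1.comp_sub_right m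
      simpa using this
    have hfun : (fun y : ℝ => y ^ 4 * (gaussianPDF m v y).toReal)
        = fun y : ℝ => (Real.sqrt (2 * Real.pi * v))⁻¹ * (y ^ 4 * Real.exp (-b * (y - m) ^ 2)) := by
      funext y
      rw [hpdf y]; ring
    rw [hfun]
    exact hint2.const_mul _

variable {E : Type*} [NormedAddCommGroup E] [InnerProductSpace ℝ E] [CompleteSpace E]

/-- Taylor remainder as an integral. -/
lemma aux_remainder_eq_integral (f : E → ℝ) (g : E → E)
    (hgrad : ∀ y, HasGradientAt f (g y) y) (hgcont : Continuous g)
    (x : E) (H : E →L[ℝ] E) (h : E) :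
    f (x + h) - f x - ⟪g x, h⟫ - ⟪h, H h⟫ / 2
      = ∫ s in (0:ℝ)..1, ⟪g (x + s • h) - g x - H (s • h), h⟫ := by
  have hderiv : ∀ s ∈ Set.uIcc (0:ℝ) 1,
      HasDerivAt (fun s : ℝ => f (x + s • h) - s * ⟪g x, h⟫ - s ^ 2 * (⟪h, H h⟫ / 2))
        (⟪g (x + s • h) - g x - H (s • h), h⟫) s := by
    intro s _
    have hline : HasDerivAt (fun s : ℝ => x + s • h) h s := by
      simpa using ((hasDerivAt_id s).smul_const h).const_add x
    have h1 : HasDerivAt (fun s : ℝ => f (x + s • h)) ⟪g (x + s • h), h⟫ s := by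
      have hf := (hgrad (x + s • h)).hasFDerivAt
      have := hf.comp_hasDerivAt s hline
      simpa [InnerProductSpace.toDual_apply_apply, Function.comp_def] using this
    have h2 : HasDerivAt (fun s : ℝ => s * ⟪g x, h⟫) ⟪g x, h⟫ s := by
      simpa using (hasDerivAt_id s).mul_const ⟪g x, h⟫
    have h3 : HasDerivAt (fun s : ℝ => s ^ 2 * (⟪h, H h⟫ / 2))
        ((2 * s) * (⟪h, H h⟫ / 2)) s := by
      simpa using (hasDerivAt_pow 2 s).mul_const (⟪h, H h⟫ / 2)
    have heq : ⟪g (x + s • h) - g x - H (s • h), h⟫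
        = ⟪g (x + s • h), h⟫ - ⟪g x, h⟫ - 2 * s * (⟪h, H h⟫ / 2) := by
      rw [inner_sub_left, inner_sub_left, H.map_smul, real_inner_smul_left,
        real_inner_comm (H h) h]
      ring
    rw [heq]
    exact (h1.sub h2).sub h3
  have hcont : Continuous fun s : ℝ => ⟪g (x + s • h) - g x - H (s • h), h⟫ := by
    refine Continuous.inner ?_ continuous_const
    exact ((hgcont.comp (by continuity)).sub continuous_const).sub (H.continuous.comp (by continuity))
  have := intervalIntegral.integral_eq_sub_of_hasDerivAt hderiv (hcont.intervalIntegrable 0 1)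
  rw [this]
  norm_num
  ring

/-- Bound on the Taylor remainder from a bound on the integrand. -/
lemma aux_remainder_le (f : E → ℝ) (g : E → E)
    (hgrad : ∀ y, HasGradientAt f (g y) y) (hgcont : Continuous g)
    (x : E) (H : E →L[ℝ] E) (h : E) (C : ℝ)
    (hC : ∀ s ∈ Set.uIoc (0:ℝ) 1, ‖g (x + s • h) - g x - H (s • h)‖ ≤ C) :
    |f (x + h) - f x - ⟪g x, h⟫ - ⟪h, H h⟫ / 2| ≤ C * ‖h‖ := by
  rw [aux_remainder_eq_integral f g hgrad hgcont x H h]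
  have := intervalIntegral.norm_integral_le_of_norm_le_const
    (C := C * ‖h‖) (f := fun s : ℝ => ⟪g (x + s • h) - g x - H (s • h), h⟫)
    (a := 0) (b := 1) ?_
  · simpa using this
  · intro s hs
    rw [Real.norm_eq_abs]
    calc |⟪g (x + s • h) - g x - H (s • h), h⟫|
        ≤ ‖g (x + s • h) - g x - H (s • h)‖ * ‖h‖ := abs_real_inner_le_norm _ _
      _ ≤ C * ‖h‖ := mul_le_mul_of_nonneg_right (hC s hs) (norm_nonneg _)

end Aux

/-- Let `π` be a strictly positive probability density on `ℝ^k` such that `log π` is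
differentiable with `L`-Lipschitz gradient `g = ∇log π`, let `x` be a point where `g` is
differentiable with derivative `H`, and let `W ~ N(0, l²Λ)` with `Λ` symmetric positive
definite and `l > 0`.  Then
`(d-1)² E[|log π(x + W/√(d-1)) - log π(x) - ⟨∇log π(x), W⟩/√(d-1) - ⟨W, H W⟩/(2(d-1))|²] → 0`
as `d → ∞`. -/
theorem second_order_remainder_L2_tendsto_zero
    {Ω : Type*} [MeasurableSpace Ω] (P : Measure Ω) [IsProbabilityMeasure P]
    {k : ℕ} (π : EuclideanSpace ℝ (Fin k) → ℝ)
    (hπpos : ∀ y, 0 < π y) (hπmeas : Measurable π) (hπint : (∫ y, π y) = 1)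
    (L : ℝ) (g : EuclideanSpace ℝ (Fin k) → EuclideanSpace ℝ (Fin k))
    (hgrad : ∀ y, HasGradientAt (fun z => Real.log (π z)) (g y) y)
    (hLip : ∀ y z, ‖g y - g z‖ ≤ L * ‖y - z‖)
    (x : EuclideanSpace ℝ (Fin k))
    (H : EuclideanSpace ℝ (Fin k) →L[ℝ] EuclideanSpace ℝ (Fin k))
    (hH : HasFDerivAt g H x)
    (Λ : Matrix (Fin k) (Fin k) ℝ) (hsym : Λ.IsSymm) (hpd : Λ.PosDef)
    (l : ℝ) (hl : 0 < l) (W : Ω → EuclideanSpace ℝ (Fin k))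
    (hW : ∀ u : EuclideanSpace ℝ (Fin k),
      Measure.map (fun ω => ⟪u, W ω⟫) P
        = gaussianReal 0 (Real.toNNReal (l ^ 2 * ∑ i, ∑ j, u i * Λ i j * u j))) :
    Tendsto (fun d : ℕ => ((d : ℝ) - 1) ^ 2 *
        ∫ ω, |Real.log (π (x + (Real.sqrt ((d : ℝ) - 1))⁻¹ • W ω)) - Real.log (π x)
            - ⟪g x, W ω⟫ / Real.sqrt ((d : ℝ) - 1)
            - ⟪W ω, H (W ω)⟫ / (2 * ((d : ℝ) - 1))| ^ 2 ∂P)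
      atTop (nhds 0) := by
  classical
  set f : EuclideanSpace ℝ (Fin k) → ℝ := fun z => Real.log (π z) with hf
  -- the scaling factor
  set t : ℕ → ℝ := fun d => (Real.sqrt ((d : ℝ) - 1))⁻¹ with ht
  -- the remainder
  set R : EuclideanSpace ℝ (Fin k) → ℝ := fun h => f (x + h) - f x - ⟪g x, h⟫ - ⟪h, H h⟫ / 2 with hR
  -- a nonnegative Lipschitz constant
  set L' : ℝ := max L 0 with hL'def
  have hL'nonneg : 0 ≤ L' := le_max_right _ _
  have hLip' : ∀ y z, ‖g y - g z‖ ≤ L' * ‖y - z‖ := by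
    intro y z
    rw [hL'def]
    exact (hLip y z).trans (mul_le_mul_of_nonneg_right (le_max_left _ _) (norm_nonneg _))
  have hgcont : Continuous g := by
    have : LipschitzWith (Real.toNNReal L') g := by
      apply LipschitzWith.of_dist_le_mul
      intro y z
      rw [dist_eq_norm, dist_eq_norm, Real.coe_toNNReal _ hL'nonneg]
      exact hLip' y z
    exact this.continuous
  set C : ℝ := L' + ‖H‖ with hCdef
  have hCnonneg : 0 ≤ C := add_nonneg hL'nonneg (norm_nonneg _)
  -- global bound on the remainder
  have hglobal : ∀ h : EuclideanSpace ℝ (Fin k), |R h| ≤ C * ‖h‖ ^ 2 := by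
    intro h
    have hb : ∀ s ∈ Set.uIoc (0:ℝ) 1, ‖g (x + s • h) - g x - H (s • h)‖ ≤ C * ‖h‖ := by
      intro s hs
      rw [Set.uIoc_of_le (by norm_num : (0:ℝ) ≤ 1)] at hs
      obtain ⟨hs0, hs1⟩ := hs
      have hsh : ‖s • h‖ ≤ ‖h‖ := by
        rw [norm_smul, Real.norm_eq_abs, abs_of_pos hs0]
        calc s * ‖h‖ ≤ 1 * ‖h‖ := mul_le_mul_of_nonneg_right hs1 (norm_nonneg _)
          _ = ‖h‖ := one_mul _
      calc ‖g (x + s • h) - g x - H (s • h)‖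
          ≤ ‖g (x + s • h) - g x‖ + ‖H (s • h)‖ := norm_sub_le _ _
        _ ≤ L' * ‖x + s • h - x‖ + ‖H‖ * ‖s • h‖ :=
            add_le_add (hLip' _ _) (H.le_opNorm _)
        _ = L' * ‖s • h‖ + ‖H‖ * ‖s • h‖ := by rw [add_sub_cancel_left]
        _ ≤ L' * ‖h‖ + ‖H‖ * ‖h‖ :=
            add_le_add (mul_le_mul_of_nonneg_left hsh hL'nonneg)
              (mul_le_mul_of_nonneg_left hsh (norm_nonneg _))
        _ = C * ‖h‖ := by rw [hCdef]; ring
    have := aux_remainder_le f g hgrad hgcont x H h (C * ‖h‖) hb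
    calc |R h| ≤ C * ‖h‖ * ‖h‖ := this
      _ = C * ‖h‖ ^ 2 := by ring
  -- little-o bound on the remainder
  have hsmall : ∀ ε : ℝ, 0 < ε → ∃ δ : ℝ, 0 < δ ∧ ∀ h : EuclideanSpace ℝ (Fin k), ‖h‖ < δ → |R h| ≤ ε * ‖h‖ ^ 2 := by
    intro ε hε
    have hlo := hasFDerivAt_iff_isLittleO_nhds_zero.mp hH
    have hev := hlo.def hε
    rw [Metric.eventually_nhds_iff] at hev
    obtain ⟨δ, hδ, hball⟩ := hev
    refine ⟨δ, hδ, fun h hh => ?_⟩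
    have hb : ∀ s ∈ Set.uIoc (0:ℝ) 1, ‖g (x + s • h) - g x - H (s • h)‖ ≤ ε * ‖h‖ := by
      intro s hs
      rw [Set.uIoc_of_le (by norm_num : (0:ℝ) ≤ 1)] at hs
      obtain ⟨hs0, hs1⟩ := hs
      have hsh : ‖s • h‖ ≤ ‖h‖ := by
        rw [norm_smul, Real.norm_eq_abs, abs_of_pos hs0]
        calc s * ‖h‖ ≤ 1 * ‖h‖ := mul_le_mul_of_nonneg_right hs1 (norm_nonneg _)
          _ = ‖h‖ := one_mul _
      have hdist : dist (s • h) (0 : EuclideanSpace ℝ (Fin k)) < δ := by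
        rw [dist_zero_right]
        exact lt_of_le_of_lt hsh hh
      have := hball hdist
      calc ‖g (x + s • h) - g x - H (s • h)‖ ≤ ε * ‖s • h‖ := this
        _ ≤ ε * ‖h‖ := mul_le_mul_of_nonneg_left hsh hε.le
    have := aux_remainder_le f g hgrad hgcont x H h (ε * ‖h‖) hb
    calc |R h| ≤ ε * ‖h‖ * ‖h‖ := this
      _ = ε * ‖h‖ ^ 2 := by ring
  -- measurability of W
  have hinner_aemeas : ∀ u : EuclideanSpace ℝ (Fin k), AEMeasurable (fun ω => ⟪u, W ω⟫) P := by
    intro u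
    by_contra hc
    have h0 := hW u
    rw [Measure.map_of_not_aemeasurable hc] at h0
    exact (IsProbabilityMeasure.ne_zero
      (gaussianReal 0 (Real.toNNReal (l ^ 2 * ∑ i, ∑ j, u i * Λ i j * u j)))) h0.symm
  have hWcoord : ∀ i : Fin k, AEMeasurable (fun ω => W ω i) P := by
    intro i
    have := hinner_aemeas (EuclideanSpace.single i (1:ℝ))
    simpa [EuclideanSpace.inner_single_left] using this
  have hWmeas : AEMeasurable W P := by
    refine ⟨fun ω => WithLp.toLp 2 (fun i => (hWcoord i).mk _ ω),
      (WithLp.measurable_toLp 2 _).comp (measurable_pi_iff.mpr fun i => (hWcoord i).measurable_mk), ?_⟩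
    have hae : ∀ᵐ ω ∂P, ∀ i, W ω i = (hWcoord i).mk _ ω :=
      ae_all_iff.mpr fun i => (hWcoord i).ae_eq_mk
    filter_upwards [hae] with ω hω
    ext i
    exact hω i
  -- integrability of ‖W‖⁴
  have hWi4 : ∀ i : Fin k, Integrable (fun ω => (W ω i) ^ 4) P := by
    intro i
    have hmap := hW (EuclideanSpace.single i (1:ℝ))
    have haei := hinner_aemeas (EuclideanSpace.single i (1:ℝ))
    have hint : Integrable (fun y : ℝ => y ^ 4)
        (Measure.map (fun ω => ⟪EuclideanSpace.single i (1:ℝ), W ω⟫) P) := by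
      rw [hmap]
      exact aux_gaussian_integrable_pow_four _ _
    have hm4 : Measurable fun y : ℝ => y ^ 4 := (continuous_pow 4).measurable
    rw [integrable_map_measure hm4.aestronglyMeasurable haei] at hint
    have : (fun y : ℝ => y ^ 4) ∘ (fun ω => ⟪EuclideanSpace.single i (1:ℝ), W ω⟫)
        = fun ω => (W ω i) ^ 4 := by
      funext ω
      simp [Function.comp, EuclideanSpace.inner_single_left]
    rwa [this] at hint
  have hnorm4 : Integrable (fun ω => ‖W ω‖ ^ 4) P := by
    have hbound : ∀ ω, ‖W ω‖ ^ 4 ≤ ∑ i : Fin k, (k : ℝ) * (W ω i) ^ 4 := by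
      intro ω
      have hnorm : ‖W ω‖ ^ 2 = ∑ i : Fin k, (W ω i) ^ 2 := by
        rw [EuclideanSpace.norm_eq]
        rw [Real.sq_sqrt (by positivity)]
        congr 1
        funext i
        rw [Real.norm_eq_abs, sq_abs]
      have h4 : ‖W ω‖ ^ 4 = (∑ i : Fin k, (W ω i) ^ 2) ^ 2 := by
        rw [← hnorm]; ring
      rw [h4]
      have := sq_sum_le_card_mul_sum_sq (s := (Finset.univ : Finset (Fin k)))
        (f := fun i => (W ω i) ^ 2)
      calc (∑ i : Fin k, (W ω i) ^ 2) ^ 2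
          ≤ (Finset.univ.card : ℝ) * ∑ i : Fin k, ((W ω i) ^ 2) ^ 2 := this
        _ = ∑ i : Fin k, (k : ℝ) * (W ω i) ^ 4 := by
            rw [Finset.mul_sum, Finset.card_univ, Fintype.card_fin]
            congr 1
            funext i
            ring
    have hIsum : Integrable (fun ω => ∑ i : Fin k, (k : ℝ) * (W ω i) ^ 4) P :=
      integrable_finset_sum _ fun i _ => (hWi4 i).const_mul _
    refine hIsum.mono' ?_ (ae_of_all _ fun ω => ?_)
    · exact ((hWmeas.norm.pow_const 4)).aestronglyMeasurable
    · rw [Real.norm_eq_abs, abs_of_nonneg (by positivity)]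
      exact hbound ω
  -- the key pointwise identification with the remainder R
  have hτpos : ∀ d : ℕ, 2 ≤ d → (0:ℝ) < (d : ℝ) - 1 := by
    intro d hd
    have : (2:ℝ) ≤ (d:ℝ) := by exact_mod_cast hd
    linarith
  have ht2 : ∀ d : ℕ, 2 ≤ d → (t d) ^ 2 = ((d:ℝ) - 1)⁻¹ := by
    intro d hd
    have h0 : (0:ℝ) ≤ ((d:ℝ) - 1)⁻¹ := inv_nonneg.mpr (hτpos d hd).le
    show ((Real.sqrt ((d:ℝ) - 1))⁻¹) ^ 2 = ((d:ℝ) - 1)⁻¹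
    rw [← Real.sqrt_inv, Real.sq_sqrt h0]
  have htnonneg : ∀ d : ℕ, 0 ≤ t d := fun d => by
    rw [ht]; positivity
  have hFeq : ∀ d : ℕ, 2 ≤ d → ∀ w : EuclideanSpace ℝ (Fin k),
      |Real.log (π (x + (t d) • w)) - Real.log (π x)
          - ⟪g x, w⟫ / Real.sqrt ((d : ℝ) - 1) - ⟪w, H w⟫ / (2 * ((d : ℝ) - 1))|
        = |R ((t d) • w)| := by
    intro d hd w
    have hτ := hτpos d hd
    have hsqrtpos : 0 < Real.sqrt ((d:ℝ) - 1) := Real.sqrt_pos.mpr hτ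
    have h1 : ⟪g x, w⟫ / Real.sqrt ((d : ℝ) - 1) = t d * ⟪g x, w⟫ := by
      show _ = (Real.sqrt ((d:ℝ) - 1))⁻¹ * ⟪g x, w⟫
      rw [div_eq_inv_mul]
    have h2 : ⟪w, H w⟫ / (2 * ((d : ℝ) - 1)) = t d * (t d * ⟪w, H w⟫) / 2 := by
      have he : t d * (t d * ⟪w, H w⟫) = (t d) ^ 2 * ⟪w, H w⟫ := by ring
      rw [he, ht2 d hd]
      have hne : ((d:ℝ) - 1) ≠ 0 := ne_of_gt hτ
      field_simp
      try left
      try ring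
    rw [h1, h2]
    congr 1
    simp only [hR, hf, real_inner_smul_right, real_inner_smul_left,
      ContinuousLinearMap.map_smul]
    try ring
  -- rewrite the goal pulling the constant inside the integral
  have hrw : (fun d : ℕ => ((d : ℝ) - 1) ^ 2 *
        ∫ ω, |Real.log (π (x + (Real.sqrt ((d : ℝ) - 1))⁻¹ • W ω)) - Real.log (π x)
            - ⟪g x, W ω⟫ / Real.sqrt ((d : ℝ) - 1)
            - ⟪W ω, H (W ω)⟫ / (2 * ((d : ℝ) - 1))| ^ 2 ∂P)
      = fun d : ℕ =>
        ∫ ω, ((d : ℝ) - 1) ^ 2 * |Real.log (π (x + (Real.sqrt ((d : ℝ) - 1))⁻¹ • W ω))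
            - Real.log (π x) - ⟪g x, W ω⟫ / Real.sqrt ((d : ℝ) - 1)
            - ⟪W ω, H (W ω)⟫ / (2 * ((d : ℝ) - 1))| ^ 2 ∂P := by
    funext d
    rw [integral_const_mul]
  rw [hrw]
  -- dominated convergence
  have key := tendsto_integral_filter_of_dominated_convergence
    (μ := P) (l := atTop)
    (F := fun (d : ℕ) (ω : Ω) => ((d : ℝ) - 1) ^ 2 *
        |Real.log (π (x + (Real.sqrt ((d : ℝ) - 1))⁻¹ • W ω)) - Real.log (π x)
          - ⟪g x, W ω⟫ / Real.sqrt ((d : ℝ) - 1)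
          - ⟪W ω, H (W ω)⟫ / (2 * ((d : ℝ) - 1))| ^ 2)
    (f := fun _ => (0:ℝ))
    (bound := fun ω => (C * ‖W ω‖ ^ 2) ^ 2)
    ?_ ?_ ?_ ?_
  · simpa using key
  · -- a.e. strong measurability
    refine Eventually.of_forall fun d => ?_
    have hφ : Measurable fun w : EuclideanSpace ℝ (Fin k) => ((d : ℝ) - 1) ^ 2 *
        |Real.log (π (x + (Real.sqrt ((d : ℝ) - 1))⁻¹ • w)) - Real.log (π x)
          - ⟪g x, w⟫ / Real.sqrt ((d : ℝ) - 1)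
          - ⟪w, H w⟫ / (2 * ((d : ℝ) - 1))| ^ 2 := by
      have m1 : Measurable fun w : EuclideanSpace ℝ (Fin k) =>
          Real.log (π (x + (Real.sqrt ((d : ℝ) - 1))⁻¹ • w)) :=
        (Real.measurable_log.comp hπmeas).comp
          ((continuous_const.add (continuous_const_smul _) : Continuous fun w : EuclideanSpace ℝ (Fin k) => x + (Real.sqrt ((d : ℝ) - 1))⁻¹ • w).measurable)
      have m2 : Measurable fun w : EuclideanSpace ℝ (Fin k) => ⟪g x, w⟫ / Real.sqrt ((d : ℝ) - 1) :=
        ((continuous_const.inner continuous_id).div_const _).measurable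
      have m3 : Measurable fun w : EuclideanSpace ℝ (Fin k) => ⟪w, H w⟫ / (2 * ((d : ℝ) - 1)) :=
        ((continuous_id.inner H.continuous).div_const _).measurable
      exact ((((m1.sub measurable_const).sub m2).sub m3).abs.pow_const 2).const_mul _
    exact (hφ.comp_aemeasurable hWmeas).aestronglyMeasurable
  · -- uniform bound for d ≥ 2
    filter_upwards [eventually_ge_atTop 2] with d hd
    refine ae_of_all _ fun ω => ?_
    have hτ := hτpos d hd
    have hτne : ((d:ℝ) - 1) ≠ 0 := ne_of_gt hτ
    rw [Real.norm_eq_abs, abs_of_nonneg (by positivity)]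
    rw [hFeq d hd (W ω)]
    have hchain : ((d:ℝ) - 1) * |R ((t d) • W ω)| ≤ C * ‖W ω‖ ^ 2 := by
      have h1 : |R ((t d) • W ω)| ≤ C * ‖(t d) • W ω‖ ^ 2 := hglobal _
      have h2 : ‖(t d) • W ω‖ ^ 2 = (t d) ^ 2 * ‖W ω‖ ^ 2 := by
        rw [norm_smul, Real.norm_eq_abs, abs_of_nonneg (htnonneg d)]
        ring
      calc ((d:ℝ) - 1) * |R ((t d) • W ω)|
          ≤ ((d:ℝ) - 1) * (C * ‖(t d) • W ω‖ ^ 2) :=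
            mul_le_mul_of_nonneg_left h1 hτ.le
        _ = ((d:ℝ) - 1) * ((d:ℝ) - 1)⁻¹ * (C * ‖W ω‖ ^ 2) := by
            rw [h2, ht2 d hd]; ring
        _ = C * ‖W ω‖ ^ 2 := by rw [mul_inv_cancel₀ hτne, one_mul]
    calc ((d:ℝ) - 1) ^ 2 * |R ((t d) • W ω)| ^ 2
        = (((d:ℝ) - 1) * |R ((t d) • W ω)|) ^ 2 := by ring
      _ ≤ (C * ‖W ω‖ ^ 2) ^ 2 :=
          pow_le_pow_left₀ (mul_nonneg hτ.le (abs_nonneg _)) hchain 2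
  · -- integrability of the bound
    have : (fun ω => (C * ‖W ω‖ ^ 2) ^ 2) = fun ω => C ^ 2 * ‖W ω‖ ^ 4 := by
      funext ω; ring
    rw [this]
    exact hnorm4.const_mul _
  · -- a.e. pointwise convergence to 0
    refine ae_of_all _ fun ω => ?_
    rw [NormedAddCommGroup.tendsto_nhds_zero]
    intro ε hε
    set c : ℝ := ‖W ω‖ ^ 2 + 1 with hcdef
    have hc : 0 < c := by positivity
    have hε₀ : 0 < Real.sqrt ε / c := div_pos (Real.sqrt_pos.mpr hε) hc
    obtain ⟨δ, hδ, hsm⟩ := hsmall (Real.sqrt ε / c) hε₀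
    -- t d → 0
    have hsqrtT : Tendsto Real.sqrt atTop atTop := by
      rw [tendsto_atTop]
      intro b
      filter_upwards [eventually_ge_atTop (b ^ 2)] with y h1
      calc b ≤ |b| := le_abs_self b
        _ = Real.sqrt (b ^ 2) := (Real.sqrt_sq_eq_abs b).symm
        _ ≤ Real.sqrt y := Real.sqrt_le_sqrt h1
    have hτT : Tendsto (fun d : ℕ => (d : ℝ) - 1) atTop atTop :=
      tendsto_atTop_add_const_right _ _ tendsto_natCast_atTop_atTop
    have htT : Tendsto (fun d : ℕ => t d) atTop (𝓝 0) :=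
      (hsqrtT.comp hτT).inv_tendsto_atTop
    have hevδ : ∀ᶠ d : ℕ in atTop, t d * ‖W ω‖ < δ := by
      have := htT.mul_const ‖W ω‖
      rw [zero_mul] at this
      exact this.eventually_lt_const hδ
    filter_upwards [hevδ, eventually_ge_atTop 2] with d h1 hd
    have hτ := hτpos d hd
    have hτne : ((d:ℝ) - 1) ≠ 0 := ne_of_gt hτ
    rw [Real.norm_eq_abs, abs_of_nonneg (by positivity)]
    rw [hFeq d hd (W ω)]
    have hnormlt : ‖(t d) • W ω‖ < δ := by
      rw [norm_smul, Real.norm_eq_abs, abs_of_nonneg (htnonneg d)]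
      exact h1
    have hchain : ((d:ℝ) - 1) * |R ((t d) • W ω)| < Real.sqrt ε := by
      have hb := hsm _ hnormlt
      have h2 : ‖(t d) • W ω‖ ^ 2 = (t d) ^ 2 * ‖W ω‖ ^ 2 := by
        rw [norm_smul, Real.norm_eq_abs, abs_of_nonneg (htnonneg d)]
        ring
      have h3 : ((d:ℝ) - 1) * |R ((t d) • W ω)| ≤ (Real.sqrt ε / c) * ‖W ω‖ ^ 2 := by
        calc ((d:ℝ) - 1) * |R ((t d) • W ω)|
            ≤ ((d:ℝ) - 1) * ((Real.sqrt ε / c) * ‖(t d) • W ω‖ ^ 2) :=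
              mul_le_mul_of_nonneg_left hb hτ.le
          _ = ((d:ℝ) - 1) * ((d:ℝ) - 1)⁻¹ * ((Real.sqrt ε / c) * ‖W ω‖ ^ 2) := by
              rw [h2, ht2 d hd]; ring
          _ = (Real.sqrt ε / c) * ‖W ω‖ ^ 2 := by rw [mul_inv_cancel₀ hτne, one_mul]
      have h4 : (Real.sqrt ε / c) * ‖W ω‖ ^ 2 < (Real.sqrt ε / c) * c := by
        apply mul_lt_mul_of_pos_left _ hε₀
        rw [hcdef]; linarith
      have h5 : (Real.sqrt ε / c) * c = Real.sqrt ε := div_mul_cancel₀ _ (ne_of_gt hc)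
      linarith
    calc ((d:ℝ) - 1) ^ 2 * |R ((t d) • W ω)| ^ 2
        = (((d:ℝ) - 1) * |R ((t d) • W ω)|) ^ 2 := by ring
      _ < (Real.sqrt ε) ^ 2 :=
          pow_lt_pow_left₀ hchain (mul_nonneg hτ.le (abs_nonneg _)) (by norm_num)
      _ = ε := Real.sq_sqrt hε.le
end

section
/- Let π be a strictly positive probability density on ℝ^k such that log π is differentiable with L-Lipschitz gradient ∇log π, let H : ℝ^k → (k×k matrices) be a measurable function that agrees Lebesgue-almost everywhere with the derivative of ∇log π (which exists almost everywhere by the Lipschitz property), let Λ be a symmetric positive definite k×k matrix, l > 0, and K_Λ = √(2‖Λ‖_F² + Tr(Λ)²). For each integer d ≥ 2 define θ(d) = l²(d−1)·K_Λ · E_{X∼π}[ √( E_{Z∼N(0, l²Λ/(d−1))}[ | log π(X+Z) − log π(X) − ⟨∇log π(X), Z⟩ − (1/2)⟨Z, H(X)·Z⟩ |² ] ) ]. Then lim_{d→∞} θ(d) = 0. -/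
/-!
Write `R_x(z)` for the remainder of the second-order Taylor expansion of `log π` at `x`.
Since `∇log π` is `L`-Lipschitz, `|R_x(z)| ≤ 2L‖z‖²` everywhere, and at every `x` where
`∇log π` is differentiable `R_x(z) = o(‖z‖²)`; together these give, for every `ε > 0`,
`R_x(z)² ≤ ε²‖z‖⁴ + C_ε‖z‖⁸`. A Gaussian `Z ~ N(0, l²Λ/(d-1))` has
`E‖Z‖^(2n) = O((d-1)^(-n))`, so `(d-1)·√(E R_x(Z)²)` is bounded uniformly in `x` and `d`
and has limsup at most `ε·O(1)` for every `ε`, i.e. tends to `0` for almost every `x`.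
Dominated convergence under `π` concludes.
-/

open MeasureTheory ProbabilityTheory Filter
open scoped RealInnerProductSpace NNReal Topology

section Taylor

variable {E : Type*} [NormedAddCommGroup E] [InnerProductSpace ℝ E] [CompleteSpace E]

noncomputable def taylorRemainder (f : E → ℝ) (g : E → E) (A : E →L[ℝ] E) (x z : E) :
    ℝ :=
  f (x + z) - f x - ⟪g x, z⟫ - ⟪A z, z⟫ / 2

variable {f : E → ℝ} {g : E → E} {A : E →L[ℝ] E} {x : E}

lemma abs_taylorRemainder_le (hf : ∀ y, HasGradientAt f (g y) y) {z : E} {c : ℝ}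
    (hc : ∀ t ∈ Set.Icc (0 : ℝ) 1, ‖g (x + t • z) - g x - t • A z‖ ≤ c * ‖z‖) :
    |taylorRemainder f g A x z| ≤ c * ‖z‖ ^ 2 := by
  set φ : ℝ → ℝ := fun s => f (x + s • z) - s * ⟪g x, z⟫ - s ^ 2 * (⟪A z, z⟫ / 2)
  have hφ : ∀ t, HasDerivAt φ ⟪g (x + t • z) - g x - t • A z, z⟫ t := by
    intro t
    have hline : HasDerivAt (fun s : ℝ => x + s • z) z t := by
      simpa using ((hasDerivAt_id t).smul_const z).const_add x
    have hfline : HasDerivAt (fun s : ℝ => f (x + s • z)) ⟪g (x + t • z), z⟫ t := by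
      have h := (hf (x + t • z)).hasFDerivAt.comp_hasDerivAt t hline
      rw [InnerProductSpace.toDual_apply_apply] at h
      exact h
    refine ((hfline.sub (hasDerivAt_mul_const ⟪g x, z⟫)).sub
      ((hasDerivAt_pow 2 t).mul_const (⟪A z, z⟫ / 2))).congr_deriv ?_
    simp only [inner_sub_left, real_inner_smul_left]
    ring
  have hderiv : ∀ t ∈ Set.Ico (0 : ℝ) 1,
      ‖⟪g (x + t • z) - g x - t • A z, z⟫‖ ≤ c * ‖z‖ ^ 2 :=
    fun t ht => (abs_real_inner_le_norm _ _).trans <| by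
      rw [sq, ← mul_assoc]
      exact mul_le_mul_of_nonneg_right (hc t (Set.mem_Icc_of_Ico ht)) (norm_nonneg z)
  have hmvt := norm_image_sub_le_of_norm_deriv_le_segment'
    (fun t _ => (hφ t).hasDerivWithinAt) hderiv 1 (Set.right_mem_Icc.2 zero_le_one)
  convert hmvt using 1
  · simp only [φ, taylorRemainder, Real.norm_eq_abs, one_smul, zero_smul, add_zero]
    ring_nf
  · ring

lemma abs_taylorRemainder_le_of_lipschitzWith (hf : ∀ y, HasGradientAt f (g y) y) {K : ℝ≥0}
    (hg : LipschitzWith K g) (hA : HasFDerivAt g A x) (z : E) :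
    |taylorRemainder f g A x z| ≤ 2 * K * ‖z‖ ^ 2 := by
  refine abs_taylorRemainder_le hf fun t ht => ?_
  have ht' : ‖t‖ ≤ 1 := by rw [Real.norm_eq_abs, abs_le]; constructor <;> linarith [ht.1, ht.2]
  calc ‖g (x + t • z) - g x - t • A z‖ ≤ ‖g (x + t • z) - g x‖ + ‖t‖ * ‖A z‖ := by
        rw [← norm_smul]; exact norm_sub_le _ _
    _ ≤ K * ‖t • z‖ + 1 * (K * ‖z‖) := by
        gcongr
        · simpa [dist_eq_norm] using hg.dist_le_mul (x + t • z) x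
        · exact (A.le_opNorm z).trans (by gcongr; exact hA.le_of_lipschitz hg)
    _ ≤ 2 * K * ‖z‖ := by
        rw [norm_smul]
        nlinarith [mul_le_mul_of_nonneg_right ht' (norm_nonneg z), K.coe_nonneg, norm_nonneg z]

lemma taylorRemainder_isLittleO (hf : ∀ y, HasGradientAt f (g y) y) (hA : HasFDerivAt g A x) :
    taylorRemainder f g A x =o[𝓝 0] fun z => ‖z‖ ^ 2 := by
  refine Asymptotics.IsLittleO.of_bound fun ε hε => ?_
  obtain ⟨δ, hδ, hball⟩ := Metric.eventually_nhds_iff_ball.1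
    ((hasFDerivAt_iff_isLittleO_nhds_zero.1 hA).def hε)
  filter_upwards [Metric.ball_mem_nhds 0 hδ] with z hz
  rw [Real.norm_eq_abs, norm_pow, norm_norm]
  refine abs_taylorRemainder_le hf fun t ht => ?_
  have htz : ‖t • z‖ ≤ ‖z‖ := by
    rw [norm_smul, Real.norm_eq_abs, abs_of_nonneg ht.1]
    exact mul_le_of_le_one_left (norm_nonneg z) ht.2
  have hmem : t • z ∈ Metric.ball (0 : E) δ := by
    rw [mem_ball_zero_iff] at hz ⊢; exact htz.trans_lt hz
  simpa [map_smul] using (hball _ hmem).trans (mul_le_mul_of_nonneg_left htz hε.le)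

end Taylor

lemma exists_sq_le_of_isLittleO {E : Type*} [NormedAddCommGroup E] {r : E → ℝ} {a : ℝ}
    (hglob : ∀ z, |r z| ≤ a * ‖z‖ ^ 2) (hloc : r =o[𝓝 0] fun z => ‖z‖ ^ 2) {ε : ℝ}
    (hε : 0 < ε) : ∃ C, 0 ≤ C ∧ ∀ z, r z ^ 2 ≤ ε ^ 2 * ‖z‖ ^ 4 + C * ‖z‖ ^ 8 := by
  obtain ⟨δ, hδ, hball⟩ := Metric.eventually_nhds_iff_ball.1 (hloc.def hε)
  refine ⟨a ^ 2 / δ ^ 4, by positivity, fun z => ?_⟩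
  rcases lt_or_ge ‖z‖ δ with hz | hz
  · have h := hball z (mem_ball_zero_iff.2 hz)
    rw [Real.norm_eq_abs, norm_pow, norm_norm] at h
    nlinarith [sq_abs (r z), abs_nonneg (r z), mul_le_mul h h (abs_nonneg _) (by positivity),
      (by positivity : 0 ≤ a ^ 2 / δ ^ 4 * ‖z‖ ^ 8)]
  · have h4 : δ ^ 4 ≤ ‖z‖ ^ 4 := pow_le_pow_left₀ hδ.le hz 4
    have h := hglob z
    calc r z ^ 2 ≤ a ^ 2 * ‖z‖ ^ 4 := by
          nlinarith [sq_abs (r z), abs_nonneg (r z), mul_le_mul h h (abs_nonneg _)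
            ((abs_nonneg _).trans h)]
      _ ≤ a ^ 2 / δ ^ 4 * ‖z‖ ^ 8 := by
          rw [div_mul_eq_mul_div, le_div_iff₀ (by positivity)]
          nlinarith [mul_le_mul_of_nonneg_left h4 (by positivity : 0 ≤ a ^ 2 * ‖z‖ ^ 4)]
      _ ≤ _ := le_add_of_nonneg_left (by positivity)

section GaussianMoments

lemma integrable_pow_two_mul_gaussianReal (v : ℝ≥0) (n : ℕ) :
    Integrable (fun x => x ^ (2 * n)) (gaussianReal 0 v) := by
  refine ((memLp_id_gaussianReal (2 * n : ℕ)).integrable_norm_pow').congr (ae_of_all _ fun x => ?_)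
  simp [pow_mul]

lemma integral_pow_two_mul_gaussianReal (v : ℝ≥0) (n : ℕ) :
    ∫ x, x ^ (2 * n) ∂gaussianReal 0 v = v ^ n * ∫ x, x ^ (2 * n) ∂gaussianReal 0 1 := by
  have hmap : (gaussianReal 0 1).map (√(v : ℝ) * ·) = gaussianReal 0 v := by
    rw [gaussianReal_map_const_mul, mul_zero, mul_one]
    congr
    simp
  rw [← hmap, integral_map (by fun_prop) (by fun_prop), ← integral_const_mul]
  congr 1 with x
  rw [mul_pow, pow_mul, Real.sq_sqrt v.coe_nonneg]

variable {Ω : Type*} {mΩ : MeasurableSpace Ω} {P : Measure Ω} {X : Ω → ℝ} {v : ℝ≥0}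

lemma ProbabilityTheory.HasLaw.integrable_pow_two_mul (hX : HasLaw X (gaussianReal 0 v) P) (n : ℕ) :
    Integrable (fun ω => X ω ^ (2 * n)) P :=
  (integrable_map_measure (g := fun x : ℝ => x ^ (2 * n)) (by fun_prop) hX.aemeasurable).1
    (hX.map_eq ▸ integrable_pow_two_mul_gaussianReal v n)

lemma ProbabilityTheory.HasLaw.integral_pow_two_mul (hX : HasLaw X (gaussianReal 0 v) P) (n : ℕ) :
    ∫ ω, X ω ^ (2 * n) ∂P = v ^ n * ∫ x, x ^ (2 * n) ∂gaussianReal 0 1 :=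
  (hX.integral_comp (f := fun x => x ^ (2 * n)) (by fun_prop)).trans
    (integral_pow_two_mul_gaussianReal v n)

end GaussianMoments

section EuclideanMoments

variable {k n : ℕ}

lemma EuclideanSpace.norm_pow_two_mul_le (z : EuclideanSpace ℝ (Fin k)) (hn : n ≠ 0) :
    ‖z‖ ^ (2 * n) ≤ k ^ (n - 1) * ∑ i, z i ^ (2 * n) := by
  obtain ⟨m, rfl⟩ := Nat.exists_eq_succ_of_ne_zero hn
  simpa [pow_mul, EuclideanSpace.real_norm_sq_eq] using
    pow_sum_le_card_mul_sum_pow (s := Finset.univ) (f := fun i => z i ^ 2)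
      (fun i _ => sq_nonneg (z i)) m

variable {μ : Measure (EuclideanSpace ℝ (Fin k))} {v : Fin k → ℝ≥0}

lemma integrable_norm_pow_two_mul_of_hasLaw
    (hμ : ∀ i, HasLaw (fun z => z i) (gaussianReal 0 (v i)) μ) (hn : n ≠ 0) :
    Integrable (fun z => ‖z‖ ^ (2 * n)) μ :=
  ((integrable_finsetSum _ fun i _ => (hμ i).integrable_pow_two_mul n).const_mul _).mono'
    (by fun_prop) (ae_of_all _ fun z => by
      simpa using EuclideanSpace.norm_pow_two_mul_le z hn)

lemma integral_norm_pow_two_mul_le_of_hasLaw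
    (hμ : ∀ i, HasLaw (fun z => z i) (gaussianReal 0 (v i)) μ) (hn : n ≠ 0) :
    ∫ z, ‖z‖ ^ (2 * n) ∂μ ≤
      k ^ (n - 1) * (∑ i, (v i : ℝ) ^ n) * ∫ x, x ^ (2 * n) ∂gaussianReal 0 1 := by
  have hcoord i := (hμ i).integrable_pow_two_mul n
  calc ∫ z, ‖z‖ ^ (2 * n) ∂μ ≤ ∫ z, k ^ (n - 1) * ∑ i, z i ^ (2 * n) ∂μ :=
        integral_mono (integrable_norm_pow_two_mul_of_hasLaw hμ hn)
          ((integrable_finsetSum _ fun i _ => hcoord i).const_mul _)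
          fun z => EuclideanSpace.norm_pow_two_mul_le z hn
    _ = _ := by
        simp only [integral_const_mul, integral_finsetSum _ fun i _ => hcoord i,
          (hμ _).integral_pow_two_mul, Finset.sum_mul, mul_assoc]

lemma hasLaw_apply_of_map_inner {P : EuclideanSpace ℝ (Fin k) → Measure ℝ}
    (hμ : ∀ u, μ.map (fun z => ⟪u, z⟫) = P u) (i : Fin k) :
    HasLaw (fun z => z i) (P (EuclideanSpace.single i 1)) μ where
  aemeasurable := by fun_prop
  map_eq := by simpa [EuclideanSpace.inner_single_left] using hμ (EuclideanSpace.single i 1)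

lemma integrable_and_integral_norm_pow_two_mul_le_of_map_inner {Λ : Matrix (Fin k) (Fin k) ℝ}
    {a s : ℝ} (hs : 0 < s) (hμ : ∀ u : EuclideanSpace ℝ (Fin k), μ.map (fun z => ⟪u, z⟫) =
      gaussianReal 0 (Real.toNNReal (a * (∑ i, ∑ j, u i * Λ i j * u j) / s))) (hn : n ≠ 0) :
    Integrable (fun z => ‖z‖ ^ (2 * n)) μ ∧ ∫ z, ‖z‖ ^ (2 * n) ∂μ ≤
      k ^ (n - 1) * (∑ i, |a * Λ i i| ^ n) * (∫ x, x ^ (2 * n) ∂gaussianReal 0 1) / s ^ n := by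
  have hcoord i : HasLaw (fun z => z i) (gaussianReal 0 (Real.toNNReal (a * Λ i i / s))) μ := by
    simpa [PiLp.single_apply] using hasLaw_apply_of_map_inner hμ i
  refine ⟨integrable_norm_pow_two_mul_of_hasLaw hcoord hn,
    (integral_norm_pow_two_mul_le_of_hasLaw hcoord hn).trans ?_⟩
  -- `Real.toNNReal` clips a negative variance to `0`, whence the absolute value.
  have hvar i : (Real.toNNReal (a * Λ i i / s) : ℝ) ≤ |a * Λ i i| / s := by
    rw [Real.coe_toNNReal', max_le_iff]
    exact ⟨by gcongr; exact le_abs_self _, by positivity⟩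
  have hm : 0 ≤ ∫ x, x ^ (2 * n) ∂gaussianReal 0 1 :=
    integral_nonneg fun x => by rw [pow_mul]; positivity
  calc _ ≤ k ^ (n - 1) * (∑ i, (|a * Λ i i| / s) ^ n) * ∫ x, x ^ (2 * n) ∂gaussianReal 0 1 := by
        gcongr with i
        exact hvar i
    _ = _ := by simp only [div_pow, ← Finset.sum_div]; ring

end EuclideanMoments

lemma Matrix.sum_sum_mul_mul_eq_inner_toEuclideanLin {k : ℕ} (M : Matrix (Fin k) (Fin k) ℝ)
    (z : EuclideanSpace ℝ (Fin k)) :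
    ∑ i, ∑ j, z i * M i j * z j = ⟪Matrix.toEuclideanLin M z, z⟫ := by
  simp only [PiLp.inner_apply, Matrix.toLpLin_apply, Matrix.mulVec, dotProduct, Finset.mul_sum,
    RCLike.inner_apply, conj_trivial]
  exact Finset.sum_congr rfl fun i _ => Finset.sum_congr rfl fun j _ => by ring

lemma measurable_uncurry_taylorRemainder {k : ℕ} {f : EuclideanSpace ℝ (Fin k) → ℝ}
    {g : EuclideanSpace ℝ (Fin k) → EuclideanSpace ℝ (Fin k)}
    {H : EuclideanSpace ℝ (Fin k) → Matrix (Fin k) (Fin k) ℝ} (hf : Continuous f)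
    (hg : Continuous g) (hH : ∀ i j, Measurable fun y => H y i j) :
    Measurable (Function.uncurry fun x z => taylorRemainder f g
      (LinearMap.toContinuousLinearMap (Matrix.toEuclideanLin (H x))) x z) := by
  simp only [Function.uncurry_def, taylorRemainder, LinearMap.coe_toContinuousLinearMap',
    ← Matrix.sum_sum_mul_mul_eq_inner_toEuclideanLin]
  fun_prop

section MomentDecay

variable {E : Type*} [NormedAddCommGroup E] [MeasurableSpace E] {μ : ℕ → Measure E} {C : ℕ → ℝ}

lemma sqrt_integral_sq_le {ν : Measure E} {r : E → ℝ} {a b : ℝ} (ha : 0 ≤ a) (hb : 0 ≤ b)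
    (h4 : Integrable (fun z => ‖z‖ ^ 4) ν) (h8 : Integrable (fun z => ‖z‖ ^ 8) ν)
    (hr : ∀ z, r z ^ 2 ≤ a * ‖z‖ ^ 4 + b * ‖z‖ ^ 8) :
    √(∫ z, r z ^ 2 ∂ν) ≤ √a * √(∫ z, ‖z‖ ^ 4 ∂ν) + √b * √(∫ z, ‖z‖ ^ 8 ∂ν) := by
  have hI : ∫ z, r z ^ 2 ∂ν ≤ a * ∫ z, ‖z‖ ^ 4 ∂ν + b * ∫ z, ‖z‖ ^ 8 ∂ν := by
    rw [← integral_const_mul, ← integral_const_mul,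
      ← integral_add (h4.const_mul a) (h8.const_mul b)]
    exact integral_mono_of_nonneg (ae_of_all _ fun z => sq_nonneg _)
      ((h4.const_mul a).add (h8.const_mul b)) (ae_of_all _ hr)
  have h4' : 0 ≤ ∫ z, ‖z‖ ^ 4 ∂ν := integral_nonneg fun z => by positivity
  have h8' : 0 ≤ ∫ z, ‖z‖ ^ 8 ∂ν := integral_nonneg fun z => by positivity
  refine Real.sqrt_le_iff.2 ⟨by positivity, hI.trans ?_⟩
  nlinarith [Real.sq_sqrt ha, Real.sq_sqrt hb, Real.sq_sqrt h4', Real.sq_sqrt h8',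
    mul_nonneg (mul_nonneg (Real.sqrt_nonneg a) (Real.sqrt_nonneg (∫ z, ‖z‖ ^ 4 ∂ν)))
      (mul_nonneg (Real.sqrt_nonneg b) (Real.sqrt_nonneg (∫ z, ‖z‖ ^ 8 ∂ν)))]

variable (hμ : ∀ n d, n ≠ 0 → 2 ≤ d →
  Integrable (fun z => ‖z‖ ^ (2 * n)) (μ d) ∧ ∫ z, ‖z‖ ^ (2 * n) ∂μ d ≤ C n / ((d : ℝ) - 1) ^ n)
include hμ

lemma sub_one_mul_sqrt_integral_sq_le {r : E → ℝ} {a b : ℝ} (ha : 0 ≤ a) (hb : 0 ≤ b)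
    (hr : ∀ z, r z ^ 2 ≤ a * ‖z‖ ^ 4 + b * ‖z‖ ^ 8) {d : ℕ} (hd : 2 ≤ d) :
    ((d : ℝ) - 1) * √(∫ z, r z ^ 2 ∂μ d) ≤ √(a * C 2) + √(b * C 4) / ((d : ℝ) - 1) := by
  obtain ⟨h4, hm4⟩ := hμ 2 d two_ne_zero hd
  obtain ⟨h8, hm8⟩ := hμ 4 d four_ne_zero hd
  have hs : 0 < (d : ℝ) - 1 := sub_pos.2 (Nat.one_lt_cast.2 hd)
  have hsqrt {I c : ℝ} {m : ℕ} (hI : I ≤ c / ((d : ℝ) - 1) ^ (2 * m)) :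
      √I ≤ √c / ((d : ℝ) - 1) ^ m := by
    rw [← Real.sqrt_sq (pow_nonneg hs.le m), ← Real.sqrt_div' _ (sq_nonneg _), ← pow_mul,
      mul_comm]
    exact Real.sqrt_le_sqrt hI
  norm_num at h4 hm4 h8 hm8
  calc ((d : ℝ) - 1) * √(∫ z, r z ^ 2 ∂μ d)
      ≤ ((d : ℝ) - 1) * (√a * (√(C 2) / ((d : ℝ) - 1) ^ 1)
          + √b * (√(C 4) / ((d : ℝ) - 1) ^ 2)) := by
        gcongr
        refine (sqrt_integral_sq_le ha hb h4 h8 hr).trans ?_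
        gcongr
        · exact hsqrt (m := 1) (by simpa using hm4)
        · exact hsqrt (m := 2) (by simpa using hm8)
    _ = √(a * C 2) + √(b * C 4) / ((d : ℝ) - 1) := by
        rw [Real.sqrt_mul ha, Real.sqrt_mul hb]
        field_simp

lemma tendsto_sub_one_mul_sqrt_integral_sq {r : E → ℝ} {a : ℝ} (hglob : ∀ z, |r z| ≤ a * ‖z‖ ^ 2)
    (hloc : r =o[𝓝 0] fun z => ‖z‖ ^ 2) :
    Tendsto (fun d : ℕ => ((d : ℝ) - 1) * √(∫ z, r z ^ 2 ∂μ d)) atTop (𝓝 0) := by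
  refine tendsto_order.2 ⟨fun a' ha' => ?_, fun a' ha' => ?_⟩
  · filter_upwards [eventually_ge_atTop 2] with d hd
    exact ha'.trans_le
      (mul_nonneg (sub_pos.2 (Nat.one_lt_cast.2 hd)).le (Real.sqrt_nonneg _))
  · set ε := a' / (2 * (√(C 2) + 1))
    have hε : 0 < ε := by positivity
    obtain ⟨Cε, hCε, hr⟩ := exists_sq_le_of_isLittleO hglob hloc hε
    have hw : Tendsto (fun d : ℕ => √(Cε * C 4) / ((d : ℝ) - 1)) atTop (𝓝 0) :=
      tendsto_const_nhds.div_atTop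
        (tendsto_atTop_add_const_right _ (-1) tendsto_natCast_atTop_atTop)
    have hεC : ε * √(C 2) < a' / 2 := by
      rw [div_mul_eq_mul_div, div_lt_iff₀ (by positivity)]
      nlinarith [Real.sqrt_nonneg (C 2)]
    filter_upwards [eventually_ge_atTop 2, hw.eventually (gt_mem_nhds (half_pos ha'))] with d hd hwd
    calc ((d : ℝ) - 1) * √(∫ z, r z ^ 2 ∂μ d)
        ≤ √(ε ^ 2 * C 2) + √(Cε * C 4) / ((d : ℝ) - 1) :=
          sub_one_mul_sqrt_integral_sq_le hμ (sq_nonneg ε) hCε hr hd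
      _ < a' := by
          rw [Real.sqrt_mul (sq_nonneg ε), Real.sqrt_sq hε.le]
          linarith

lemma tendsto_integral_sub_one_mul_sqrt_integral_sq_taylorRemainder [InnerProductSpace ℝ E]
    [CompleteSpace E] [∀ d, SFinite (μ d)] {ν : Measure E} [IsFiniteMeasure ν] {f : E → ℝ}
    {g : E → E} {A : E → E →L[ℝ] E} {K : ℝ≥0} (hf : ∀ y, HasGradientAt f (g y) y)
    (hg : LipschitzWith K g) (hA : ∀ᵐ x ∂ν, HasFDerivAt g (A x) x)
    (hR : Measurable (Function.uncurry fun x z => taylorRemainder f g (A x) x z)) :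
    Tendsto (fun d : ℕ => ∫ x, ((d : ℝ) - 1) * √(∫ z, taylorRemainder f g (A x) x z ^ 2 ∂μ d) ∂ν)
      atTop (𝓝 0) := by
  have hmeas (d : ℕ) : AEStronglyMeasurable
      (fun x => ((d : ℝ) - 1) * √(∫ z, taylorRemainder f g (A x) x z ^ 2 ∂μ d)) ν :=
    ((hR.pow_const 2).stronglyMeasurable.integral_prod_right' |>.measurable.sqrt.const_mul _
      ).aestronglyMeasurable
  have hbound : ∀ᶠ d : ℕ in atTop, ∀ᵐ x ∂ν,
      ‖((d : ℝ) - 1) * √(∫ z, taylorRemainder f g (A x) x z ^ 2 ∂μ d)‖ ≤ √(4 * K ^ 2 * C 2) := by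
    filter_upwards [eventually_ge_atTop 2] with d hd
    filter_upwards [hA] with x hx
    have hr z : taylorRemainder f g (A x) x z ^ 2 ≤ 4 * K ^ 2 * ‖z‖ ^ 4 + 0 * ‖z‖ ^ 8 := by
      have := abs_taylorRemainder_le_of_lipschitzWith hf hg hx z
      nlinarith [sq_abs (taylorRemainder f g (A x) x z), abs_nonneg (taylorRemainder f g (A x) x z)]
    rw [Real.norm_of_nonneg (mul_nonneg (sub_pos.2 (Nat.one_lt_cast.2 hd)).le (Real.sqrt_nonneg _))]
    simpa only [zero_mul, Real.sqrt_zero, zero_div, add_zero] using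
      sub_one_mul_sqrt_integral_sq_le hμ (by positivity) le_rfl hr hd
  have hlim : ∀ᵐ x ∂ν, Tendsto (fun d : ℕ => ((d : ℝ) - 1) *
      √(∫ z, taylorRemainder f g (A x) x z ^ 2 ∂μ d)) atTop (𝓝 0) := by
    filter_upwards [hA] with x hx
    exact tendsto_sub_one_mul_sqrt_integral_sq hμ
      (abs_taylorRemainder_le_of_lipschitzWith hf hg hx) (taylorRemainder_isLittleO hf hx)
  simpa using tendsto_integral_filter_of_dominated_convergence _ (.of_forall hmeas) hbound
    (integrable_const _) hlim

end MomentDecay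

theorem theta_tendsto_zero_general
    {k : ℕ} (π : EuclideanSpace ℝ (Fin k) → ℝ)
    (hπint : (∫ y, π y) = 1)
    (L : ℝ) (g : EuclideanSpace ℝ (Fin k) → EuclideanSpace ℝ (Fin k))
    (hgrad : ∀ y, HasGradientAt (fun z => Real.log (π z)) (g y) y)
    (hLip : ∀ y z, ‖g y - g z‖ ≤ L * ‖y - z‖)
    (H : EuclideanSpace ℝ (Fin k) → Matrix (Fin k) (Fin k) ℝ)
    (hHmeas : ∀ i j, Measurable fun y => H y i j)
    (hHae : ∀ᵐ y : EuclideanSpace ℝ (Fin k),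
      HasFDerivAt g (LinearMap.toContinuousLinearMap (Matrix.toEuclideanLin (H y))) y)
    (Λ : Matrix (Fin k) (Fin k) ℝ) (l : ℝ)
    (μ : ℕ → Measure (EuclideanSpace ℝ (Fin k))) (hprob : ∀ d, IsProbabilityMeasure (μ d))
    (hμ : ∀ d : ℕ, 2 ≤ d → ∀ u : EuclideanSpace ℝ (Fin k),
      Measure.map (fun z => ⟪u, z⟫) (μ d)
        = gaussianReal 0
            (Real.toNNReal (l ^ 2 * (∑ i, ∑ j, u i * Λ i j * u j) / ((d : ℝ) - 1)))) :
    Tendsto (fun d : ℕ =>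
        l ^ 2 * ((d : ℝ) - 1) * Real.sqrt (2 * ∑ i, ∑ j, Λ i j ^ 2 + (∑ i, Λ i i) ^ 2) *
          ∫ x, Real.sqrt (∫ z, |Real.log (π (x + z)) - Real.log (π x) - ⟪g x, z⟫
                - (1 / 2) * ∑ i, ∑ j, z i * H x i j * z j| ^ 2 ∂(μ d))
            ∂(volume.withDensity fun y => ENNReal.ofReal (π y)))
      atTop (nhds 0) := by
  set A : EuclideanSpace ℝ (Fin k) → EuclideanSpace ℝ (Fin k) →L[ℝ] EuclideanSpace ℝ (Fin k) :=
    fun x => LinearMap.toContinuousLinearMap (Matrix.toEuclideanLin (H x))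
  have hR x z : Real.log (π (x + z)) - Real.log (π x) - ⟪g x, z⟫
      - (1 / 2) * ∑ i, ∑ j, z i * H x i j * z j
      = taylorRemainder (fun y => Real.log (π y)) g (A x) x z := by
    rw [taylorRemainder, Matrix.sum_sum_mul_mul_eq_inner_toEuclideanLin]
    simp only [A, LinearMap.coe_toContinuousLinearMap']
    ring
  simp_rw [hR, sq_abs]
  have hg : LipschitzWith (Real.toNNReal L) g := LipschitzWith.of_dist_le_mul fun y z => by
    simpa only [dist_eq_norm] using (hLip y z).trans (by gcongr; exact Real.le_coe_toNNReal L)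
  have hf : Continuous fun y => Real.log (π y) :=
    continuous_iff_continuousAt.2 fun y => (hgrad y).hasFDerivAt.continuousAt
  have hπ : Integrable π := Integrable.of_integral_ne_zero (by simp [hπint])
  set ν := volume.withDensity fun y => ENNReal.ofReal (π y)
  have : IsFiniteMeasure ν := isFiniteMeasure_withDensity_ofReal hπ.2
  have hlim := tendsto_integral_sub_one_mul_sqrt_integral_sq_taylorRemainder (ν := ν)
    (fun n d hn hd => integrable_and_integral_norm_pow_two_mul_le_of_map_inner
      (sub_pos.2 (Nat.one_lt_cast.2 hd)) (hμ d hd) hn)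
    hgrad hg ((withDensity_absolutelyContinuous _ _).ae_le hHae)
    (measurable_uncurry_taylorRemainder hf hg.continuous hHmeas)
  have := hlim.const_mul (l ^ 2 * √(2 * ∑ i, ∑ j, Λ i j ^ 2 + (∑ i, Λ i i) ^ 2))
  rw [mul_zero] at this
  refine this.congr fun d => ?_
  rw [← integral_const_mul, ← integral_const_mul]
  congr 1 with x
  ring

/-- Lemma (θ(d) → 0): for a strictly positive probability density `π` on `ℝ^k` whose
log-density has an `L`-Lipschitz gradient `g = ∇log π`, with `H` a measurable matrix-valued
function agreeing Lebesgue-a.e. with the derivative of `g`, `Λ` symmetric positive definite,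
`l > 0`, `K_Λ = √(2‖Λ‖_F² + Tr(Λ)²)`, and `Z ~ N(0, l²Λ/(d-1))`,
`θ(d) = l²(d-1) K_Λ E_{X∼π}[ √( E_Z |log π(X+Z) - log π(X) - ⟨g(X), Z⟩ - ⟨Z, H(X)Z⟩/2|² ) ]`
tends to `0` as `d → ∞`. -/
theorem theta_tendsto_zero
    {k : ℕ} (π : EuclideanSpace ℝ (Fin k) → ℝ)
    (hπpos : ∀ y, 0 < π y) (hπmeas : Measurable π) (hπint : (∫ y, π y) = 1)
    (L : ℝ) (g : EuclideanSpace ℝ (Fin k) → EuclideanSpace ℝ (Fin k))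
    (hgrad : ∀ y, HasGradientAt (fun z => Real.log (π z)) (g y) y)
    (hLip : ∀ y z, ‖g y - g z‖ ≤ L * ‖y - z‖)
    (H : EuclideanSpace ℝ (Fin k) → Matrix (Fin k) (Fin k) ℝ)
    (hHmeas : ∀ i j, Measurable fun y => H y i j)
    (hHae : ∀ᵐ y : EuclideanSpace ℝ (Fin k),
      HasFDerivAt g (LinearMap.toContinuousLinearMap (Matrix.toEuclideanLin (H y))) y)
    (Λ : Matrix (Fin k) (Fin k) ℝ) (hsym : Λ.IsSymm) (hpd : Λ.PosDef) (l : ℝ) (hl : 0 < l)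
    (μ : ℕ → Measure (EuclideanSpace ℝ (Fin k))) (hprob : ∀ d, IsProbabilityMeasure (μ d))
    (hμ : ∀ d : ℕ, 2 ≤ d → ∀ u : EuclideanSpace ℝ (Fin k),
      Measure.map (fun z => ⟪u, z⟫) (μ d)
        = gaussianReal 0
            (Real.toNNReal (l ^ 2 * (∑ i, ∑ j, u i * Λ i j * u j) / ((d : ℝ) - 1)))) :
    Tendsto (fun d : ℕ =>
        l ^ 2 * ((d : ℝ) - 1) * Real.sqrt (2 * ∑ i, ∑ j, Λ i j ^ 2 + (∑ i, Λ i i) ^ 2) *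
          ∫ x, Real.sqrt (∫ z, |Real.log (π (x + z)) - Real.log (π x) - ⟪g x, z⟫
                - (1 / 2) * ∑ i, ∑ j, z i * H x i j * z j| ^ 2 ∂(μ d))
            ∂(volume.withDensity fun y => ENNReal.ofReal (π y)))
      atTop (nhds 0) :=
  theta_tendsto_zero_general π hπint L g hgrad hLip H hHmeas hHae Λ l μ hprob hμ
end

section
/- Let π be a strictly positive probability density on ℝ^k (with respect to Lebesgue measure) such that log π is twice continuously differentiable and ∇log π is Lipschitz with constant L, and let Λ be a symmetric k×k matrix. Then E_{X∼π}[ Tr( Λ·∇²log π(X) ) ] = − E_{X∼π}[ ⟨∇log π(X), Λ·∇log π(X)⟩ ], and both expectations are finite. -/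
open MeasureTheory
open scoped RealInnerProductSpace
open Set Filter Topology InnerProductSpace
open scoped NNReal ENNReal

noncomputable section



variable {n : ℕ}

def splitEquiv (i : Fin (n+1)) : EuclideanSpace ℝ (Fin (n+1)) ≃ᵐ ℝ × (Fin n → ℝ) :=
  (MeasurableEquiv.toLp 2 (Fin (n+1) → ℝ)).symm.trans
    (MeasurableEquiv.piFinSuccAbove (fun _ => ℝ) i)

lemma splitEquiv_mp (i : Fin (n+1)) :
    MeasurePreserving (splitEquiv i) (volume : Measure (EuclideanSpace ℝ (Fin (n+1)))) volume :=
  (volume_preserving_piFinSuccAbove (fun _ : Fin (n+1) => ℝ) i).comp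
    (EuclideanSpace.volume_preserving_symm_measurableEquiv_toLp (Fin (n+1)))

lemma splitEquiv_symm_apply (i : Fin (n+1)) (t : ℝ) (y : Fin n → ℝ) (j : Fin (n+1)) :
    (splitEquiv i).symm (t, y) j = Fin.insertNth (α := fun _ => ℝ) i t y j := by
  rfl

lemma splitEquiv_symm_affine (i : Fin (n+1)) (t : ℝ) (y : Fin n → ℝ) :
    (splitEquiv i).symm (t, y)
      = (splitEquiv i).symm (0, y) + t • (EuclideanSpace.single i 1) := by
  ext j
  rw [PiLp.add_apply, PiLp.smul_apply, smul_eq_mul,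
    splitEquiv_symm_apply, splitEquiv_symm_apply, EuclideanSpace.single_apply]
  refine Fin.succAboveCases i ?_ ?_ j
  · simp
  · intro j'
    simp [Fin.succAbove_ne i j']

theorem ibp_line (i : Fin (n+1)) (u : EuclideanSpace ℝ (Fin (n+1)) → ℝ)
    (u' : EuclideanSpace ℝ (Fin (n+1)) → (EuclideanSpace ℝ (Fin (n+1)) →L[ℝ] ℝ))
    (hu' : ∀ x, HasFDerivAt u (u' x) x)
    (hu : Integrable u) (hui : Integrable (fun x => u' x (EuclideanSpace.single i 1))) :
    ∫ x, u' x (EuclideanSpace.single i 1) = 0 := by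
  set T := splitEquiv i with hTdef
  have hTs : MeasurePreserving T.symm volume volume := (splitEquiv_mp i).symm T
  have key : ∀ (w : EuclideanSpace ℝ (Fin (n+1)) → ℝ),
      (∫ x, w x) = ∫ p : ℝ × (Fin n → ℝ), w (T.symm p) := fun w =>
    (hTs.integral_comp T.symm.measurableEmbedding w).symm
  have keyI : ∀ (w : EuclideanSpace ℝ (Fin (n+1)) → ℝ), Integrable w volume →
      Integrable (fun p : ℝ × (Fin n → ℝ) => w (T.symm p)) volume := fun w hw =>
    (hTs.integrable_comp_emb T.symm.measurableEmbedding).2 hw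
  have huiP := keyI _ hui
  have huP := keyI _ hu
  rw [key]
  rw [MeasureTheory.Measure.volume_eq_prod ℝ (Fin n → ℝ)] at huiP huP ⊢
  rw [integral_prod_symm _ huiP]
  have h1 := huiP.prod_left_ae
  have h2 := huP.prod_left_ae
  rw [← integral_zero (Fin n → ℝ) ℝ (μ := volume)]
  apply integral_congr_ae
  filter_upwards [h1, h2] with y hy1 hy2
  have hline : ∀ t : ℝ, HasDerivAt (fun s => u (T.symm (s, y)))
      (u' (T.symm (t, y)) (EuclideanSpace.single i 1)) t := by
    intro t
    have h2' : HasDerivAt (fun s : ℝ => T.symm (s, y)) (EuclideanSpace.single i 1) t := by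
      rw [show (fun s : ℝ => T.symm (s, y))
          = fun s : ℝ => T.symm (0, y) + s • (EuclideanSpace.single i 1)
        from funext fun s => splitEquiv_symm_affine i s y]
      simpa using ((hasDerivAt_id t).smul_const
        (EuclideanSpace.single i 1 : EuclideanSpace ℝ (Fin (n+1)))).const_add (T.symm (0, y))
    exact (hu' (T.symm (t, y))).comp_hasDerivAt t h2'
  exact integral_eq_zero_of_hasDerivAt_of_integrable hline hy1 hy2



def chi (M t : ℝ) : ℝ := M^2 * t / (M^2 + t^2)
def chi' (M t : ℝ) : ℝ := M^2 * (M^2 - t^2) / (M^2 + t^2)^2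

lemma chi_denom_pos {M : ℝ} (hM : 0 < M) (t : ℝ) : 0 < M^2 + t^2 :=
  lt_of_lt_of_le (pow_pos hM 2) (le_add_of_nonneg_right (sq_nonneg t))

lemma chi_hasDerivAt {M : ℝ} (hM : 0 < M) (t : ℝ) : HasDerivAt (chi M) (chi' M t) t := by
  have h1 : HasDerivAt (fun s : ℝ => M^2 * s) (M^2) t := by
    simpa using (hasDerivAt_id t).const_mul (M^2)
  have h2 : HasDerivAt (fun s : ℝ => M^2 + s^2) (2*t) t := by
    simpa [mul_comm] using ((hasDerivAt_pow 2 t)).const_add (M^2)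
  have h3 := h1.div h2 (ne_of_gt (chi_denom_pos hM t))
  refine h3.congr_deriv ?_
  unfold chi'
  field_simp
  ring

lemma chi_cont {M : ℝ} (hM : 0 < M) : Continuous (chi M) := by
  unfold chi
  exact (continuous_const.mul continuous_id).div
    (continuous_const.add (continuous_pow 2)) (fun t => ne_of_gt (chi_denom_pos hM t))

lemma chi'_cont {M : ℝ} (hM : 0 < M) : Continuous (chi' M) := by
  unfold chi'
  exact (continuous_const.mul (continuous_const.sub (continuous_pow 2))).div
    ((continuous_const.add (continuous_pow 2)).pow 2)
    (fun t => pow_ne_zero 2 (ne_of_gt (chi_denom_pos hM t)))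

lemma abs_chi_le {M : ℝ} (hM : 0 < M) (t : ℝ) : |chi M t| ≤ M := by
  rw [chi, abs_div, abs_of_pos (chi_denom_pos hM t), div_le_iff₀ (chi_denom_pos hM t)]
  rw [abs_mul, abs_of_pos (pow_pos hM 2)]
  have h2 : 2 * (M * |t|) ≤ M^2 + t^2 := by
    have := sq_nonneg (M - |t|)
    nlinarith [sq_abs t]
  nlinarith [abs_nonneg t, hM.le, sq_nonneg t, pow_pos hM 2]

lemma abs_chi'_le {M : ℝ} (hM : 0 < M) (t : ℝ) : |chi' M t| ≤ 1 := by
  rw [chi', abs_div, abs_of_pos (pow_pos (chi_denom_pos hM t) 2),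
    div_le_one (pow_pos (chi_denom_pos hM t) 2), abs_mul, abs_of_pos (pow_pos hM 2)]
  have h1 : |M^2 - t^2| ≤ M^2 + t^2 := by
    rw [abs_le]; constructor <;> nlinarith [sq_nonneg t, sq_nonneg M]
  have h2 : (0:ℝ) ≤ M^2 := sq_nonneg M
  nlinarith [chi_denom_pos hM t, sq_nonneg t]

lemma chi_mul_nonneg {M : ℝ} (hM : 0 < M) (t : ℝ) : 0 ≤ chi M t * t := by
  rw [chi, div_mul_eq_mul_div]
  apply div_nonneg _ (chi_denom_pos hM t).le
  nlinarith [sq_nonneg (M*t), sq_nonneg t, sq_nonneg M]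

lemma chi_mul_le {M : ℝ} (hM : 0 < M) (t : ℝ) : chi M t * t ≤ M^2 := by
  rw [chi, div_mul_eq_mul_div, div_le_iff₀ (chi_denom_pos hM t)]
  nlinarith [sq_nonneg M, sq_nonneg t, sq_nonneg (M*t)]

lemma chi_mul_mono {t : ℝ} : Monotone (fun m : ℕ => chi ((m:ℝ)+1) t * t) := by
  intro a b hab
  have h1 : (0:ℝ) < (a:ℝ)+1 := by positivity
  have h2 : (0:ℝ) < (b:ℝ)+1 := by positivity
  have hab' : ((a:ℝ)+1) ≤ (b:ℝ)+1 := by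
    have : (a:ℝ) ≤ (b:ℝ) := Nat.cast_le.2 hab
    linarith
  have hA2 : ((a:ℝ)+1)^2 ≤ ((b:ℝ)+1)^2 := pow_le_pow_left₀ h1.le hab' 2
  simp only [chi, div_mul_eq_mul_div]
  rw [div_le_div_iff₀ (chi_denom_pos h1 t) (chi_denom_pos h2 t)]
  nlinarith [mul_le_mul_of_nonneg_right hA2 (mul_self_nonneg (t*t)), sq_nonneg t]

lemma chi_mul_tendsto (t : ℝ) :
    Tendsto (fun m : ℕ => chi ((m:ℝ)+1) t * t) atTop (𝓝 (t^2)) := by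
  have hden : Tendsto (fun m : ℕ => (((m:ℝ)+1)^2 + t^2)) atTop atTop := by
    apply tendsto_atTop_mono (fun m : ℕ => ?_) tendsto_natCast_atTop_atTop
    nlinarith [sq_nonneg t, sq_nonneg ((m:ℝ)), Nat.cast_nonneg (α := ℝ) m]
  have h0 : Tendsto (fun m : ℕ => t^4 / (((m:ℝ)+1)^2 + t^2)) atTop (𝓝 0) :=
    Tendsto.div_atTop tendsto_const_nhds hden
  have heq : ∀ m : ℕ, chi ((m:ℝ)+1) t * t = t^2 - t^4 / (((m:ℝ)+1)^2 + t^2) := by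
    intro m
    have h1 : (0:ℝ) < (m:ℝ)+1 := by positivity
    rw [chi, div_mul_eq_mul_div, eq_sub_iff_add_eq, ← add_div, div_eq_iff
      (ne_of_gt (chi_denom_pos h1 t))]
    ring
  simp only [heq]
  simpa using (tendsto_const_nhds (x := t^2)).sub h0

lemma iSup_ofReal_eq {c : ℕ → ℝ} {l : ℝ} (hmono : Monotone c)
    (hlim : Tendsto c atTop (𝓝 l)) :
    (⨆ m, ENNReal.ofReal (c m)) = ENNReal.ofReal l := by
  have h1 : Monotone (fun m => ENNReal.ofReal (c m)) :=
    fun a b h => ENNReal.ofReal_le_ofReal (hmono h)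
  have h2 : Tendsto (fun m => ENNReal.ofReal (c m)) atTop (𝓝 (ENNReal.ofReal l)) :=
    (ENNReal.continuous_ofReal.tendsto _).comp hlim
  exact (tendsto_nhds_unique (tendsto_atTop_iSup h1) h2)

theorem main_step {n : ℕ} (π : EuclideanSpace ℝ (Fin (n+1)) → ℝ)
    (hπpos : ∀ y, 0 < π y) (hπmeas : Measurable π) (hπint : (∫ y, π y) = 1)
    (hC2 : ContDiff ℝ 2 fun y => Real.log (π y))
    (L : ℝ) (g : EuclideanSpace ℝ (Fin (n+1)) → EuclideanSpace ℝ (Fin (n+1)))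
    (hgrad : ∀ y, HasGradientAt (fun z => Real.log (π z)) (g y) y)
    (hLip : ∀ y z, ‖g y - g z‖ ≤ L * ‖y - z‖) :
    (∀ i j : Fin (n+1),
        Integrable (fun x => fderiv ℝ g x (EuclideanSpace.single i 1) j * π x) volume)
    ∧ (∀ i j : Fin (n+1), Integrable (fun x => g x i * g x j * π x) volume)
    ∧ (∀ i j : Fin (n+1),
        (∫ x, fderiv ℝ g x (EuclideanSpace.single i 1) j * π x)
          = - ∫ x, g x i * g x j * π x) := by
  have hE : True := trivial
  set f : EuclideanSpace ℝ (Fin (n+1)) → ℝ := fun y => Real.log (π y) with hf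
  have πeq : ∀ x, Real.exp (f x) = π x := fun x => Real.exp_log (hπpos x)
  have hfD : ∀ x, HasFDerivAt f ((toDual ℝ (EuclideanSpace ℝ (Fin (n+1)))) (g x)) x := fun x => (hgrad x).hasFDerivAt
  have hπD : ∀ x : EuclideanSpace ℝ (Fin (n+1)), HasFDerivAt π (π x • ((toDual ℝ (EuclideanSpace ℝ (Fin (n+1)))) (g x) : EuclideanSpace ℝ (Fin (n+1)) →L[ℝ] ℝ)) x := by
    intro x
    have := (hfD x).exp
    rw [show (fun y => Real.exp (f y)) = π from funext πeq, πeq x] at this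
    exact this
  have hgC1 : ContDiff ℝ 1 g := by
    have h1 : ContDiff ℝ 1 (fderiv ℝ f) := hC2.fderiv_right (by norm_num)
    have heq : g = fun x => (toDual ℝ (EuclideanSpace ℝ (Fin (n+1)))).symm (fderiv ℝ f x) := by
      funext x
      rw [(hfD x).fderiv]
      simp
    rw [heq]
    exact (toDual ℝ (EuclideanSpace ℝ (Fin (n+1)))).symm.contDiff.comp h1
  have hgD : ∀ x, HasFDerivAt g (fderiv ℝ g x) x :=
    fun x => (hgC1.differentiable one_ne_zero x).hasFDerivAt
  have hgcont : Continuous g := hgC1.continuous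
  have hdgcont : Continuous (fderiv ℝ g) := hgC1.continuous_fderiv one_ne_zero
  have hL0 : 0 ≤ L := by
    have h := hLip (EuclideanSpace.single 0 1) 0
    simp only [sub_zero, EuclideanSpace.norm_single, norm_one, mul_one] at h
    exact le_trans (norm_nonneg _) h
  have hdgL : ∀ x, ‖fderiv ℝ g x‖ ≤ L := by
    intro x
    have hLipW : LipschitzWith ⟨L, hL0⟩ g := LipschitzWith.of_dist_le_mul fun y z => by
      rw [dist_eq_norm, dist_eq_norm]; exact hLip y z
    exact norm_fderiv_le_of_lipschitz ℝ hLipW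
  have hπcont : Continuous π := by
    rw [show π = fun y => Real.exp (f y) from (funext πeq).symm]
    exact Real.continuous_exp.comp hC2.continuous
  have hπInt : Integrable π volume := by
    by_contra h
    rw [integral_undef h] at hπint
    exact one_ne_zero hπint.symm
  -- domination helper
  have hmono : ∀ {w : EuclideanSpace ℝ (Fin (n+1)) → ℝ} (C : ℝ), Continuous w → (∀ x, |w x| ≤ C * π x) →
      Integrable w volume := by
    intro w C hw hbd
    refine Integrable.mono (hπInt.const_mul C) hw.aestronglyMeasurable ?_
    filter_upwards with x
    rw [Real.norm_eq_abs, Real.norm_eq_abs]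
    exact le_trans (hbd x) (le_abs_self _)
  -- coordinate bound
  have hcoord : ∀ (w : EuclideanSpace ℝ (Fin (n+1))) (i : Fin (n+1)), |w i| ≤ ‖w‖ := by
    intro w i
    have h := abs_real_inner_le_norm w (EuclideanSpace.single i (1:ℝ))
    rw [EuclideanSpace.inner_single_right] at h
    simpa [EuclideanSpace.norm_single] using h
  have hdgbd : ∀ (x : EuclideanSpace ℝ (Fin (n+1))) (i j : Fin (n+1)), |fderiv ℝ g x (EuclideanSpace.single i 1) j| ≤ L := by
    intro x i j
    refine le_trans (hcoord _ j) (le_trans ((fderiv ℝ g x).le_opNorm _) ?_)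
    rw [EuclideanSpace.norm_single, norm_one, mul_one]
    exact hdgL x
  -- continuity of coordinates of g and of the derivative
  have hgi_cont : ∀ i : Fin (n+1), Continuous fun y => g y i := by
    intro i
    have := (EuclideanSpace.proj (𝕜 := ℝ) i).continuous.comp hgcont
    simpa [Function.comp_def] using this
  have hdg_app_cont : ∀ i j : Fin (n+1),
      Continuous fun y => fderiv ℝ g y (EuclideanSpace.single i 1) j := by
    intro i j
    have h1 : Continuous fun y => fderiv ℝ g y (EuclideanSpace.single i 1) :=
      hdgcont.clm_apply continuous_const
    have := (EuclideanSpace.proj (𝕜 := ℝ) j).continuous.comp h1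
    simpa [Function.comp_def] using this
  -- Fisher information bound
  have hFisher : ∀ i : Fin (n+1), Integrable (fun x => g x i ^ 2 * π x) volume := by
    intro i
    have hAint : ∀ m : ℕ, Integrable (fun y => chi ((m:ℝ)+1) (g y i) * g y i * π y) volume ∧
        (∫ y, chi ((m:ℝ)+1) (g y i) * g y i * π y) ≤ L := by
      intro m
      have hMpos : (0:ℝ) < (m:ℝ)+1 := by positivity
      set M : ℝ := (m:ℝ)+1 with hMdef
      set v : EuclideanSpace ℝ (Fin (n+1)) → ℝ := fun y => chi M (g y i) * π y with hv
      set v' : EuclideanSpace ℝ (Fin (n+1)) → (EuclideanSpace ℝ (Fin (n+1)) →L[ℝ] ℝ) :=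
        fun y => (chi M (g y i)) • (π y • ((toDual ℝ (EuclideanSpace ℝ (Fin (n+1)))) (g y))) +
          (π y) • (chi' M (g y i) • ((EuclideanSpace.proj i).comp (fderiv ℝ g y))) with hv'
      have hvD : ∀ y, HasFDerivAt v (v' y) y := by
        intro y
        have hc : HasFDerivAt (fun y : EuclideanSpace ℝ (Fin (n+1)) => g y i)
            ((EuclideanSpace.proj i).comp (fderiv ℝ g y)) y :=
          by simpa [Function.comp_def] using (EuclideanSpace.proj (𝕜 := ℝ) i).hasFDerivAt.comp y (hgD y)
        have h1 : HasFDerivAt (fun y => chi M (g y i))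
            (chi' M (g y i) • ((EuclideanSpace.proj i).comp (fderiv ℝ g y))) y :=
          by exact (chi_hasDerivAt hMpos (g y i)).comp_hasFDerivAt y hc
        exact h1.mul (hπD y)
      have hval : ∀ y, v' y (EuclideanSpace.single i 1)
          = chi M (g y i) * g y i * π y
            + chi' M (g y i) * (fderiv ℝ g y (EuclideanSpace.single i 1) i) * π y := by
        intro y
        have hin : ⟪g y, EuclideanSpace.single i (1:ℝ)⟫ = g y i := by
          rw [EuclideanSpace.inner_single_right]; simp
        simp only [hv', ContinuousLinearMap.add_apply, ContinuousLinearMap.smul_apply,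
          ContinuousLinearMap.coe_comp', Function.comp_apply, toDual_apply_apply, smul_eq_mul,
          PiLp.proj_apply, hin]
        ring
      have hvInt : Integrable v volume := by
        refine hmono M ((chi_cont hMpos).comp (hgi_cont i) |>.mul hπcont) ?_
        intro x
        rw [abs_mul, abs_of_pos (hπpos x)]
        exact mul_le_mul_of_nonneg_right (abs_chi_le hMpos _) (hπpos x).le
      have hAcont : Continuous (fun y => chi M (g y i) * g y i * π y) :=
        (((chi_cont hMpos).comp (hgi_cont i)).mul (hgi_cont i)).mul hπcont
      have hAInt : Integrable (fun y => chi M (g y i) * g y i * π y) volume := by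
        refine hmono (M^2) hAcont ?_
        intro x
        rw [abs_mul, abs_of_pos (hπpos x)]
        refine mul_le_mul_of_nonneg_right ?_ (hπpos x).le
        rw [abs_of_nonneg (chi_mul_nonneg hMpos _)]
        exact chi_mul_le hMpos _
      have hBcont : Continuous
          (fun y => chi' M (g y i) * (fderiv ℝ g y (EuclideanSpace.single i 1) i) * π y) :=
        (((chi'_cont hMpos).comp (hgi_cont i)).mul (hdg_app_cont i i)).mul hπcont
      have hBInt : Integrable
          (fun y => chi' M (g y i) * (fderiv ℝ g y (EuclideanSpace.single i 1) i) * π y)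
          volume := by
        refine hmono L hBcont ?_
        intro x
        rw [abs_mul, abs_of_pos (hπpos x)]
        refine mul_le_mul_of_nonneg_right ?_ (hπpos x).le
        rw [abs_mul]
        calc |chi' M (g x i)| * |fderiv ℝ g x (EuclideanSpace.single i 1) i|
            ≤ 1 * L := mul_le_mul (abs_chi'_le hMpos _) (hdgbd x i i) (abs_nonneg _)
              zero_le_one
          _ = L := one_mul L
      have hzero : (∫ y, v' y (EuclideanSpace.single i 1)) = 0 := by
        refine ibp_line i v v' hvD hvInt ?_
        rw [show (fun x => v' x (EuclideanSpace.single i 1))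
            = fun y => chi M (g y i) * g y i * π y
              + chi' M (g y i) * (fderiv ℝ g y (EuclideanSpace.single i 1) i) * π y
          from funext hval]
        exact hAInt.add hBInt
      rw [show (fun x => v' x (EuclideanSpace.single i 1))
          = fun y => chi M (g y i) * g y i * π y
            + chi' M (g y i) * (fderiv ℝ g y (EuclideanSpace.single i 1) i) * π y
        from funext hval] at hzero
      rw [integral_add hAInt hBInt] at hzero
      refine ⟨hAInt, ?_⟩
      have hB_abs : |∫ y, chi' M (g y i) * (fderiv ℝ g y (EuclideanSpace.single i 1) i) * π y|
          ≤ L := by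
        rw [← Real.norm_eq_abs]
        refine le_trans (norm_integral_le_integral_norm _) ?_
        simp only [Real.norm_eq_abs]
        have : (∫ y, |chi' M (g y i) * (fderiv ℝ g y (EuclideanSpace.single i 1) i) * π y|)
            ≤ ∫ y, L * π y := by
          refine integral_mono hBInt.abs (hπInt.const_mul L) ?_
          intro x
          show |chi' M (g x i) * (fderiv ℝ g x (EuclideanSpace.single i 1) i) * π x| ≤ L * π x
          rw [abs_mul, abs_of_pos (hπpos x), abs_mul]
          refine mul_le_mul_of_nonneg_right ?_ (hπpos x).le
          calc |chi' M (g x i)| * |fderiv ℝ g x (EuclideanSpace.single i 1) i|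
              ≤ 1 * L := mul_le_mul (abs_chi'_le hMpos _) (hdgbd x i i) (abs_nonneg _)
                zero_le_one
            _ = L := one_mul L
        refine le_trans this ?_
        rw [integral_const_mul, hπint, mul_one]
      have := neg_le_abs (∫ y, chi' M (g y i) * (fderiv ℝ g y (EuclideanSpace.single i 1) i) * π y)
      linarith [eq_neg_of_add_eq_zero_left hzero]
    -- monotone convergence
    have hiSup : ∀ y, (⨆ m : ℕ, ENNReal.ofReal (chi ((m:ℝ)+1) (g y i) * g y i * π y))
        = ENNReal.ofReal (g y i ^ 2 * π y) := by
      intro y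
      have hmon : Monotone fun m : ℕ => chi ((m:ℝ)+1) (g y i) * g y i * π y := by
        intro a b hab
        exact mul_le_mul_of_nonneg_right (chi_mul_mono (t := g y i) hab) (hπpos y).le
      have hten : Tendsto (fun m : ℕ => chi ((m:ℝ)+1) (g y i) * g y i * π y) atTop
          (𝓝 (g y i ^ 2 * π y)) := by
        have := (chi_mul_tendsto (g y i)).mul_const (π y)
        simpa [mul_assoc] using this
      exact iSup_ofReal_eq hmon hten
    have hAmeas : ∀ m : ℕ,
        Measurable fun y => ENNReal.ofReal (chi ((m:ℝ)+1) (g y i) * g y i * π y) := by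
      intro m
      have hMpos : (0:ℝ) < (m:ℝ)+1 := by positivity
      exact ENNReal.measurable_ofReal.comp
        ((((chi_cont hMpos).comp (hgi_cont i)).mul (hgi_cont i)).mul hπcont).measurable
    have hQ : (∫⁻ y, ENNReal.ofReal (g y i ^ 2 * π y)) ≤ ENNReal.ofReal L := by
      have h1 : (∫⁻ y, ENNReal.ofReal (g y i ^ 2 * π y))
          = ⨆ m : ℕ, ∫⁻ y, ENNReal.ofReal (chi ((m:ℝ)+1) (g y i) * g y i * π y) := by
        rw [← lintegral_iSup hAmeas]
        · exact lintegral_congr fun y => (hiSup y).symm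
        · intro a b hab y
          refine ENNReal.ofReal_le_ofReal ?_
          exact mul_le_mul_of_nonneg_right (chi_mul_mono (t := g y i) hab) (hπpos y).le
      rw [h1]
      refine iSup_le fun m => ?_
      have hMpos : (0:ℝ) < (m:ℝ)+1 := by positivity
      rw [← ofReal_integral_eq_lintegral_ofReal (hAint m).1 ?_]
      · exact ENNReal.ofReal_le_ofReal (hAint m).2
      · filter_upwards with y
        exact mul_nonneg (chi_mul_nonneg hMpos _) (hπpos y).le
    have hcontQ : Continuous fun y => g y i ^ 2 * π y :=
      (((hgi_cont i).pow 2).mul hπcont)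
    refine ⟨hcontQ.aestronglyMeasurable, ?_⟩
    rw [hasFiniteIntegral_iff_ofReal ?_]
    · exact lt_of_le_of_lt hQ ENNReal.ofReal_lt_top
    · filter_upwards with y
      exact mul_nonneg (sq_nonneg _) (hπpos y).le
  -- integrability of g_i g_j π
  have hgg : ∀ i j : Fin (n+1), Integrable (fun x => g x i * g x j * π x) volume := by
    intro i j
    refine Integrable.mono ((hFisher i).add (hFisher j))
      ((((hgi_cont i).mul (hgi_cont j)).mul hπcont).aestronglyMeasurable) ?_
    filter_upwards with x
    rw [Real.norm_eq_abs, Real.norm_eq_abs]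
    have h2 : |g x i * g x j| ≤ g x i^2 + g x j^2 := by
      rw [abs_mul]
      nlinarith [sq_nonneg (|g x i| - |g x j|), sq_abs (g x i), sq_abs (g x j),
        abs_nonneg (g x i), abs_nonneg (g x j)]
    calc |g x i * g x j * π x| = |g x i * g x j| * π x := by
          rw [abs_mul, abs_of_pos (hπpos x)]
      _ ≤ (g x i^2 + g x j^2) * π x := mul_le_mul_of_nonneg_right h2 (hπpos x).le
      _ = g x i^2 * π x + g x j^2 * π x := by ring
      _ ≤ |g x i ^2 * π x + g x j^2 * π x| := le_abs_self _
  have hdgπ : ∀ i j : Fin (n+1),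
      Integrable (fun x => fderiv ℝ g x (EuclideanSpace.single i 1) j * π x) volume := by
    intro i j
    refine hmono L ((hdg_app_cont i j).mul hπcont) ?_
    intro x
    rw [abs_mul, abs_of_pos (hπpos x)]
    exact mul_le_mul_of_nonneg_right (hdgbd x i j) (hπpos x).le
  have hgjπ : ∀ j : Fin (n+1), Integrable (fun x => g x j * π x) volume := by
    intro j
    refine Integrable.mono (hπInt.add (hFisher j))
      (((hgi_cont j).mul hπcont).aestronglyMeasurable) ?_
    filter_upwards with x
    rw [Real.norm_eq_abs, Real.norm_eq_abs, abs_mul, abs_of_pos (hπpos x)]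
    have h3 : |g x j| ≤ 1 + g x j^2 := by
      nlinarith [sq_abs (g x j), sq_nonneg (|g x j| - 1), abs_nonneg (g x j)]
    calc |g x j| * π x ≤ (1 + g x j^2) * π x := mul_le_mul_of_nonneg_right h3 (hπpos x).le
      _ = π x + g x j^2 * π x := by ring
      _ ≤ |π x + g x j^2 * π x| := le_abs_self _
  refine ⟨hdgπ, hgg, ?_⟩
  intro i j
  set u : EuclideanSpace ℝ (Fin (n+1)) → ℝ := fun y => g y j * π y with hu
  set u' : EuclideanSpace ℝ (Fin (n+1)) → (EuclideanSpace ℝ (Fin (n+1)) →L[ℝ] ℝ) :=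
    fun y => (g y j) • (π y • ((toDual ℝ (EuclideanSpace ℝ (Fin (n+1)))) (g y))) +
      (π y) • ((EuclideanSpace.proj j).comp (fderiv ℝ g y)) with hu'
  have huD : ∀ y, HasFDerivAt u (u' y) y := by
    intro y
    have hc : HasFDerivAt (fun y : EuclideanSpace ℝ (Fin (n+1)) => g y j)
        ((EuclideanSpace.proj j).comp (fderiv ℝ g y)) y :=
      by simpa [Function.comp_def] using
        (EuclideanSpace.proj (𝕜 := ℝ) j).hasFDerivAt.comp y (hgD y)
    exact hc.mul (hπD y)
  have hval : ∀ y, u' y (EuclideanSpace.single i 1)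
      = g y i * g y j * π y + fderiv ℝ g y (EuclideanSpace.single i 1) j * π y := by
    intro y
    have hin : ⟪g y, EuclideanSpace.single i (1:ℝ)⟫ = g y i := by
      rw [EuclideanSpace.inner_single_right]; simp
    simp only [hu', ContinuousLinearMap.add_apply, ContinuousLinearMap.smul_apply,
      ContinuousLinearMap.coe_comp', Function.comp_apply, toDual_apply_apply, smul_eq_mul,
      PiLp.proj_apply, hin]
    ring
  have heq : (fun x => u' x (EuclideanSpace.single i 1))
      = fun y => g y i * g y j * π y
        + fderiv ℝ g y (EuclideanSpace.single i 1) j * π y := funext hval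
  have hzero : (∫ x, u' x (EuclideanSpace.single i 1)) = 0 := by
    refine ibp_line i u u' huD (hgjπ j) ?_
    rw [heq]
    exact (hgg i j).add (hdgπ i j)
  rw [heq, integral_add (hgg i j) (hdgπ i j)] at hzero
  linarith

/-- Distributional integration by parts: for a strictly positive probability density `π`
on `ℝ^k` with `log π` twice continuously differentiable and `L`-Lipschitz gradient
`g = ∇log π`, and `Λ` a symmetric `k×k` matrix,
`E_{X∼π}[Tr(Λ ∇²log π(X))] = - E_{X∼π}[⟨∇log π(X), Λ ∇log π(X)⟩]`,
and both expectations are finite. -/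
theorem integration_by_parts_log_density
    {k : ℕ} (π : EuclideanSpace ℝ (Fin k) → ℝ)
    (hπpos : ∀ y, 0 < π y) (hπmeas : Measurable π) (hπint : (∫ y, π y) = 1)
    (hC2 : ContDiff ℝ 2 fun y => Real.log (π y))
    (L : ℝ) (g : EuclideanSpace ℝ (Fin k) → EuclideanSpace ℝ (Fin k))
    (hgrad : ∀ y, HasGradientAt (fun z => Real.log (π z)) (g y) y)
    (hLip : ∀ y z, ‖g y - g z‖ ≤ L * ‖y - z‖)
    (Λ : Matrix (Fin k) (Fin k) ℝ) (hsym : Λ.IsSymm) :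
    Integrable
        (fun x => ∑ i, ∑ j, Λ i j * fderiv ℝ g x (EuclideanSpace.single i 1) j)
        (volume.withDensity fun y => ENNReal.ofReal (π y))
      ∧ Integrable (fun x => ∑ i, ∑ j, g x i * Λ i j * g x j)
          (volume.withDensity fun y => ENNReal.ofReal (π y))
      ∧ (∫ x, ∑ i, ∑ j, Λ i j * fderiv ℝ g x (EuclideanSpace.single i 1) j
            ∂(volume.withDensity fun y => ENNReal.ofReal (π y)))
          = - ∫ x, ∑ i, ∑ j, g x i * Λ i j * g x j
              ∂(volume.withDensity fun y => ENNReal.ofReal (π y)) := by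
  -- conversion lemmas for the withDensity measure
  have hν : Measurable fun y : EuclideanSpace ℝ (Fin k) => ENNReal.ofReal (π y) :=
    ENNReal.measurable_ofReal.comp hπmeas
  have hconv : ∀ h : EuclideanSpace ℝ (Fin k) → ℝ,
      Integrable h (volume.withDensity fun y => ENNReal.ofReal (π y))
        ↔ Integrable (fun x => h x * π x) volume := by
    intro h
    rw [integrable_withDensity_iff hν (by
      filter_upwards with x; exact ENNReal.ofReal_lt_top)]
    have heq : (fun x => h x * (ENNReal.ofReal (π x)).toReal) = fun x => h x * π x :=
      funext fun x => by rw [ENNReal.toReal_ofReal (hπpos x).le]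
    rw [heq]
  have hIeq : ∀ h : EuclideanSpace ℝ (Fin k) → ℝ,
      (∫ x, h x ∂(volume.withDensity fun y => ENNReal.ofReal (π y)))
        = ∫ x, h x * π x := by
    intro h
    rw [show (fun y : EuclideanSpace ℝ (Fin k) => ENNReal.ofReal (π y))
        = (fun y => ((Real.toNNReal (π y) : ℝ≥0) : ℝ≥0∞)) from rfl]
    rw [integral_withDensity_eq_integral_smul hπmeas.real_toNNReal h]
    congr 1
    funext x
    rw [NNReal.smul_def, Real.coe_toNNReal _ (hπpos x).le, smul_eq_mul, mul_comm]
  rcases k with _ | n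
  · -- k = 0 : all sums are empty
    simp only [Finset.univ_eq_empty, Finset.sum_empty]
    refine ⟨integrable_zero _ _ _, integrable_zero _ _ _, by simp⟩
  · obtain ⟨H1, H2, H3⟩ := main_step π hπpos hπmeas hπint hC2 L g hgrad hLip
    have e1 : ∀ x : EuclideanSpace ℝ (Fin (n+1)),
        (∑ i, ∑ j, Λ i j * fderiv ℝ g x (EuclideanSpace.single i 1) j) * π x
          = ∑ i, ∑ j, Λ i j * (fderiv ℝ g x (EuclideanSpace.single i 1) j * π x) := by
      intro x
      rw [Finset.sum_mul]
      refine Finset.sum_congr rfl fun i _ => ?_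
      rw [Finset.sum_mul]
      exact Finset.sum_congr rfl fun j _ => by ring
    have e2 : ∀ x : EuclideanSpace ℝ (Fin (n+1)),
        (∑ i, ∑ j, g x i * Λ i j * g x j) * π x
          = ∑ i, ∑ j, Λ i j * (g x i * g x j * π x) := by
      intro x
      rw [Finset.sum_mul]
      refine Finset.sum_congr rfl fun i _ => ?_
      rw [Finset.sum_mul]
      exact Finset.sum_congr rfl fun j _ => by ring
    have hI1 : Integrable (fun x => ∑ i, ∑ j, Λ i j *
        (fderiv ℝ g x (EuclideanSpace.single i 1) j * π x)) volume :=
      integrable_finset_sum _ fun i _ =>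
        integrable_finset_sum _ fun j _ => (H1 i j).const_mul (Λ i j)
    have hI2 : Integrable (fun x => ∑ i, ∑ j, Λ i j * (g x i * g x j * π x)) volume :=
      integrable_finset_sum _ fun i _ =>
        integrable_finset_sum _ fun j _ => (H2 i j).const_mul (Λ i j)
    refine ⟨?_, ?_, ?_⟩
    · rw [hconv]
      have : (fun x => (∑ i, ∑ j, Λ i j * fderiv ℝ g x (EuclideanSpace.single i 1) j) * π x)
          = fun x => ∑ i, ∑ j, Λ i j * (fderiv ℝ g x (EuclideanSpace.single i 1) j * π x) :=
        funext e1
      rw [this]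
      exact hI1
    · rw [hconv]
      have : (fun x => (∑ i, ∑ j, g x i * Λ i j * g x j) * π x)
          = fun x => ∑ i, ∑ j, Λ i j * (g x i * g x j * π x) := funext e2
      rw [this]
      exact hI2
    · rw [hIeq, hIeq]
      have l1 : (∫ x, (∑ i, ∑ j, Λ i j * fderiv ℝ g x (EuclideanSpace.single i 1) j) * π x)
          = ∑ i, ∑ j, Λ i j * ∫ x, fderiv ℝ g x (EuclideanSpace.single i 1) j * π x := by
        rw [show (fun x => (∑ i, ∑ j, Λ i j * fderiv ℝ g x (EuclideanSpace.single i 1) j) * π x)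
            = fun x => ∑ i, ∑ j, Λ i j * (fderiv ℝ g x (EuclideanSpace.single i 1) j * π x)
          from funext e1]
        rw [integral_finset_sum _ fun i _ =>
          integrable_finset_sum _ fun j _ => (H1 i j).const_mul (Λ i j)]
        refine Finset.sum_congr rfl fun i _ => ?_
        rw [integral_finset_sum _ fun j _ => (H1 i j).const_mul (Λ i j)]
        exact Finset.sum_congr rfl fun j _ => integral_const_mul _ _
      have l2 : (∫ x, (∑ i, ∑ j, g x i * Λ i j * g x j) * π x)
          = ∑ i, ∑ j, Λ i j * ∫ x, g x i * g x j * π x := by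
        rw [show (fun x => (∑ i, ∑ j, g x i * Λ i j * g x j) * π x)
            = fun x => ∑ i, ∑ j, Λ i j * (g x i * g x j * π x) from funext e2]
        rw [integral_finset_sum _ fun i _ =>
          integrable_finset_sum _ fun j _ => (H2 i j).const_mul (Λ i j)]
        refine Finset.sum_congr rfl fun i _ => ?_
        rw [integral_finset_sum _ fun j _ => (H2 i j).const_mul (Λ i j)]
        exact Finset.sum_congr rfl fun j _ => integral_const_mul _ _
      rw [l1, l2]
      rw [← Finset.sum_neg_distrib]
      refine Finset.sum_congr rfl fun i _ => ?_
      rw [← Finset.sum_neg_distrib]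
      refine Finset.sum_congr rfl fun j _ => ?_
      rw [H3 i j, mul_neg]

end
end
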